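/- arXiv:1509.01037 — 4 statements merged into one kernel-verified Lean document; each statement's English description precedes it below -/
import Mathlib

section
/- Let L be a smooth function on the second-order jet bundle J²E of a fibred manifold p: E → N. The Poincaré–Cartan form of the second-order Lagrangian density Λ = L·v projects onto J¹E if and only if (1) L is an affine function with respect to the affine structure of p²₁: J²E → J¹E, i.e. L = Lᵅⁱʲ·y^α_{(ij)} + L₀ with Lᵅⁱʲ = Lᵅʲⁱ and L₀ functions on J¹E, and (2) the symmetry equations ∂L_β^{ih}/∂y_a^α = ∂L_α^{ia}/∂y_h^β hold for all indices a,h,i = 1,…,n and α,β = 1,…,m. -/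
noncomputable section

open scoped BigOperators

/-- Coordinate model of the first-order jet bundle `J¹E` of a trivial fibred
manifold `ℝⁿ × ℝᵐ → ℝⁿ`: coordinates `(xʲ, y^α, y_i^α)`. -/
abbrev J1S (n m : ℕ) := (Fin n → ℝ) × (Fin m → ℝ) × (Fin m → Fin n → ℝ)

/-- Coordinate model of `J²E`. -/
abbrev J2S (n m : ℕ) := (Fin n → ℝ) × (Fin m → ℝ) × (Fin m → Fin n → ℝ) ×
  (Fin m → Fin n → Fin n → ℝ)

/-- Coordinate model of `J³E`. -/
abbrev J3S (n m : ℕ) := (Fin n → ℝ) × (Fin m → ℝ) × (Fin m → Fin n → ℝ) ×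
  (Fin m → Fin n → Fin n → ℝ) × (Fin m → Fin n → Fin n → Fin n → ℝ)

variable {n m : ℕ}

def pr21 (p : J2S n m) : J1S n m := (p.1, p.2.1, p.2.2.1)
def pr31 (p : J3S n m) : J1S n m := (p.1, p.2.1, p.2.2.1)
def pr32 (p : J3S n m) : J2S n m := (p.1, p.2.1, p.2.2.1, p.2.2.2.1)

/-- Partial derivative `∂f/∂xⁱ` of a function on `J¹E`. -/
def pd1x (f : J1S n m → ℝ) (i : Fin n) (p : J1S n m) : ℝ :=
  fderiv ℝ f p (Pi.single i 1, 0, 0)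

/-- Partial derivative `∂f/∂y^α` of a function on `J¹E`. -/
def pd1y (f : J1S n m → ℝ) (α : Fin m) (p : J1S n m) : ℝ :=
  fderiv ℝ f p (0, Pi.single α 1, 0)

/-- Partial derivative `∂f/∂y_i^α` of a function on `J¹E`. -/
def pd1y1 (f : J1S n m → ℝ) (α : Fin m) (i : Fin n) (p : J1S n m) : ℝ :=
  fderiv ℝ f p (0, 0, Pi.single α (Pi.single i 1))

/-- Partial derivative `∂f/∂xⁱ` of a function on `J²E`. -/
def pd2x (f : J2S n m → ℝ) (i : Fin n) (p : J2S n m) : ℝ :=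
  fderiv ℝ f p (Pi.single i 1, 0, 0, 0)

def pd2y (f : J2S n m → ℝ) (α : Fin m) (p : J2S n m) : ℝ :=
  fderiv ℝ f p (0, Pi.single α 1, 0, 0)

def pd2y1 (f : J2S n m → ℝ) (α : Fin m) (i : Fin n) (p : J2S n m) : ℝ :=
  fderiv ℝ f p (0, 0, Pi.single α (Pi.single i 1), 0)

/-- Partial derivative `∂f/∂y_{(ij)}^α` of a function on `J²E` (full-matrix
second-order coordinates). -/
def pd2y2 (f : J2S n m → ℝ) (α : Fin m) (i j : Fin n) (p : J2S n m) : ℝ :=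
  fderiv ℝ f p (0, 0, 0, Pi.single α (Pi.single i (Pi.single j 1)))

/-- Total derivative `D_j f` of a function `f` on `J¹E`, as a function on `J²E`. -/
def TD1 (f : J1S n m → ℝ) (j : Fin n) (p : J2S n m) : ℝ :=
  pd1x f j (pr21 p) + ∑ α, p.2.2.1 α j * pd1y f α (pr21 p)
    + ∑ α, ∑ k, p.2.2.2 α k j * pd1y1 f α k (pr21 p)

/-- Total derivative `D_j f` of a function `f` on `J²E`, as a function on `J³E`. -/
def TD2 (f : J2S n m → ℝ) (j : Fin n) (p : J3S n m) : ℝ :=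
  pd2x f j (pr32 p) + ∑ α, p.2.2.1 α j * pd2y f α (pr32 p)
    + ∑ α, ∑ k, p.2.2.2.1 α k j * pd2y1 f α k (pr32 p)
    + ∑ α, ∑ k, ∑ l, p.2.2.2.2 α k l j * pd2y2 f α k l (pr32 p)

/-- The Legendre coefficient `L_α^{ij} = (1/(2−δ_{ij}))·∂L/∂y_{(ij)}^α`
(in full-matrix second-order coordinates). -/
def Lc2 (L : J2S n m → ℝ) (α : Fin m) (i j : Fin n) (p : J2S n m) : ℝ :=
  pd2y2 L α i j p

/-- The Legendre coefficient
`L_α^{i0} = ∂L/∂y_i^α − (1/(2−δ_{ij}))·D_j(∂L/∂y_{(ij)}^α)`, a function on `J³E`. -/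
def Lc0 (L : J2S n m → ℝ) (α : Fin m) (i : Fin n) (p : J3S n m) : ℝ :=
  pd2y1 L α i (pr32 p) - ∑ j, TD2 (fun q => Lc2 L α i j q) j p

/-- The coefficient of the volume form in the Poincaré–Cartan form,
`L − y_i^α L_α^{i0} − y_{(hi)}^α L_α^{ih}`, a function on `J³E`. -/
def Hterm (L : J2S n m → ℝ) (p : J3S n m) : ℝ :=
  L (pr32 p) - (∑ α, ∑ i, p.2.2.1 α i * Lc0 L α i p)
    - ∑ α, ∑ h, ∑ i, p.2.2.2.1 α h i * Lc2 L α h i (pr32 p)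

def FactorsJ1of3 (f : J3S n m → ℝ) : Prop := ∃ g : J1S n m → ℝ, ∀ p, f p = g (pr31 p)

def FactorsJ1of2 (f : J2S n m → ℝ) : Prop := ∃ g : J1S n m → ℝ, ∀ p, f p = g (pr21 p)

/-- All the coefficients of the Poincaré–Cartan form `Θ_Λ` of the second-order
Lagrangian density `Λ = L·v` factor through `J¹E`; i.e. `Θ_Λ` projects onto `J¹E`. -/
def PCProjectsJ1 (L : J2S n m → ℝ) : Prop :=
  (∀ α i, FactorsJ1of3 (Lc0 L α i)) ∧ (∀ α i j, FactorsJ1of2 (Lc2 L α i j)) ∧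
    FactorsJ1of3 (Hterm L)

/-- `L` is an affine function with respect to the affine structure of
`p²₁ : J²E → J¹E`, with symmetric coefficients `A = (L_α^{ij})` and constant term
`L₀`, both functions on `J¹E`. -/
def IsAffine (L : J2S n m → ℝ) (A : Fin m → Fin n → Fin n → J1S n m → ℝ)
    (L0 : J1S n m → ℝ) : Prop :=
  (∀ α i j q, A α i j q = A α j i q) ∧
    ∀ p : J2S n m,
      L p = (∑ α, ∑ i, ∑ j, A α i j (pr21 p) * p.2.2.2 α i j) + L0 (pr21 p)

/-- The symmetry equations `∂L_β^{ih}/∂y_a^α = ∂L_α^{ia}/∂y_h^β`. -/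
def SymmCond (A : Fin m → Fin n → Fin n → J1S n m → ℝ) : Prop :=
  ∀ (a h i : Fin n) (α β : Fin m) (q : J1S n m),
    pd1y1 (A β i h) α a q = pd1y1 (A α i a) β h q

/-- `L` depends symmetrically on the (full-matrix) second-order jet coordinates. -/
def SymL2 (L : J2S n m → ℝ) : Prop :=
  ∀ (x : Fin n → ℝ) (y : Fin m → ℝ) (y1 : Fin m → Fin n → ℝ)
    (y2 : Fin m → Fin n → Fin n → ℝ),
    L (x, y, y1, y2) = L (x, y, y1, fun α i j => y2 α j i)
/-! ### Auxiliary infrastructure -/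

section Auxiliary

variable {n m : ℕ}

/-- `pr21` as a continuous linear map. -/
def pi21 : J2S n m →L[ℝ] J1S n m :=
  (ContinuousLinearMap.fst ℝ _ _).prod
    (((ContinuousLinearMap.fst ℝ _ _).comp (ContinuousLinearMap.snd ℝ _ _)).prod
      ((ContinuousLinearMap.fst ℝ _ _).comp
        ((ContinuousLinearMap.snd ℝ _ _).comp (ContinuousLinearMap.snd ℝ _ _))))

lemma pi21_apply (p : J2S n m) : pi21 p = pr21 p := rfl

/-- The coordinate function `p ↦ p.2.2.2 α i j` as a continuous linear map. -/
def cY2 (α : Fin m) (i j : Fin n) : J2S n m →L[ℝ] ℝ :=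
  ((ContinuousLinearMap.proj j : (Fin n → ℝ) →L[ℝ] ℝ).comp
    (((ContinuousLinearMap.proj i : (Fin n → Fin n → ℝ) →L[ℝ] (Fin n → ℝ))).comp
      (((ContinuousLinearMap.proj α :
          (Fin m → Fin n → Fin n → ℝ) →L[ℝ] (Fin n → Fin n → ℝ))).comp
        ((ContinuousLinearMap.snd ℝ _ _).comp
          ((ContinuousLinearMap.snd ℝ _ _).comp (ContinuousLinearMap.snd ℝ _ _))))))

lemma cY2_apply (α : Fin m) (i j : Fin n) (p : J2S n m) : cY2 α i j p = p.2.2.2 α i j := rfl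

lemma single_collapse (X : Fin m → Fin n → Fin n → ℝ) (β : Fin m) (h j : Fin n) :
    ∑ a, ∑ b, ∑ c, (Pi.single β (Pi.single h (Pi.single j (1:ℝ)) :
      Fin n → Fin n → ℝ) : Fin m → Fin n → Fin n → ℝ) a b c * X a b c = X β h j := by
  simp [Pi.single_apply, ite_apply, Pi.zero_apply, ite_mul, zero_mul, one_mul]

lemma single_collapse' (X : Fin m → Fin n → Fin n → ℝ) (β : Fin m) (h j : Fin n) :
    ∑ c, ∑ a, ∑ b, (Pi.single β (Pi.single h (Pi.single j (1:ℝ)) :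
      Fin n → Fin n → ℝ) : Fin m → Fin n → Fin n → ℝ) a b c * X a b c = X β h j := by
  simp [Pi.single_apply, ite_apply, Pi.zero_apply, ite_mul, zero_mul, one_mul]

lemma y2_decomp (y2 : Fin m → Fin n → Fin n → ℝ) :
    y2 = ∑ α, ∑ i, ∑ j, y2 α i j • (Pi.single α (Pi.single i (Pi.single j (1:ℝ)) :
      Fin n → Fin n → ℝ) : Fin m → Fin n → Fin n → ℝ) := by
  funext a b c
  simp [Finset.sum_apply, ite_apply, Pi.smul_apply, smul_eq_mul, Pi.single_apply,
    mul_ite, mul_one, mul_zero]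

/-- The affine model Lagrangian. -/
def Laff (A : Fin m → Fin n → Fin n → J1S n m → ℝ) (L0 : J1S n m → ℝ) (p : J2S n m) : ℝ :=
  (∑ α, ∑ i, ∑ j, A α i j (pr21 p) * p.2.2.2 α i j) + L0 (pr21 p)

lemma hasFDerivAt_comp21 (f : J1S n m → ℝ) (hf : Differentiable ℝ f) (p : J2S n m) :
    HasFDerivAt (fun q => f (pr21 q)) ((fderiv ℝ f (pr21 p)).comp pi21) p :=
  (hf (pr21 p)).hasFDerivAt.comp p (pi21.hasFDerivAt)

lemma pd2x_comp21 (f : J1S n m → ℝ) (hf : Differentiable ℝ f) (i : Fin n) (p : J2S n m) :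
    pd2x (fun q => f (pr21 q)) i p = pd1x f i (pr21 p) := by
  unfold pd2x pd1x
  rw [(hasFDerivAt_comp21 f hf p).fderiv]
  rfl

lemma pd2y_comp21 (f : J1S n m → ℝ) (hf : Differentiable ℝ f) (α : Fin m) (p : J2S n m) :
    pd2y (fun q => f (pr21 q)) α p = pd1y f α (pr21 p) := by
  unfold pd2y pd1y
  rw [(hasFDerivAt_comp21 f hf p).fderiv]
  rfl

lemma pd2y1_comp21 (f : J1S n m → ℝ) (hf : Differentiable ℝ f) (α : Fin m) (i : Fin n)
    (p : J2S n m) : pd2y1 (fun q => f (pr21 q)) α i p = pd1y1 f α i (pr21 p) := by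
  unfold pd2y1 pd1y1
  rw [(hasFDerivAt_comp21 f hf p).fderiv]
  rfl

lemma pd2y2_comp21 (f : J1S n m → ℝ) (hf : Differentiable ℝ f) (α : Fin m) (i j : Fin n)
    (p : J2S n m) : pd2y2 (fun q => f (pr21 q)) α i j p = 0 := by
  unfold pd2y2
  rw [(hasFDerivAt_comp21 f hf p).fderiv]
  show fderiv ℝ f (pr21 p) (pi21 (0, 0, 0, _)) = 0
  have : pi21 ((0, 0, 0, Pi.single α (Pi.single i (Pi.single j (1:ℝ)))) : J2S n m)
      = 0 := rfl
  rw [this, map_zero]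

end Auxiliary
section Aux2

variable {n m : ℕ} (A : Fin m → Fin n → Fin n → J1S n m → ℝ) (L0 : J1S n m → ℝ)

lemma hasFDerivAt_Laff (hA : ∀ α i j, Differentiable ℝ (A α i j))
    (hL0 : Differentiable ℝ L0) (p : J2S n m) :
    HasFDerivAt (Laff A L0)
      ((∑ α, ∑ i, ∑ j, (A α i j (pr21 p) • cY2 α i j
          + p.2.2.2 α i j • (fderiv ℝ (A α i j) (pr21 p)).comp pi21))
        + (fderiv ℝ L0 (pr21 p)).comp pi21) p := by
  unfold Laff
  apply HasFDerivAt.add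
  · apply HasFDerivAt.fun_sum; intro α _
    apply HasFDerivAt.fun_sum; intro i _
    apply HasFDerivAt.fun_sum; intro j _
    exact (hasFDerivAt_comp21 _ (hA α i j) p).mul ((cY2 α i j).hasFDerivAt)
  · exact hasFDerivAt_comp21 _ hL0 p

variable {A} {L0}

lemma pd2y2_Laff (hA : ∀ α i j, Differentiable ℝ (A α i j)) (hL0 : Differentiable ℝ L0)
    (β : Fin m) (k l : Fin n) (p : J2S n m) :
    pd2y2 (Laff A L0) β k l p = A β k l (pr21 p) := by
  unfold pd2y2
  rw [(hasFDerivAt_Laff A L0 hA hL0 p).fderiv]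
  simp only [ContinuousLinearMap.add_apply, ContinuousLinearMap.coe_sum',
    Finset.sum_apply, ContinuousLinearMap.smul_apply, ContinuousLinearMap.comp_apply,
    smul_eq_mul]
  rw [show pi21 ((0, 0, 0, Pi.single β (Pi.single k (Pi.single l (1:ℝ)))) : J2S n m)
      = 0 from rfl]
  simp only [map_zero, mul_zero, add_zero, cY2_apply]
  simp [Pi.single_apply, ite_apply, Pi.zero_apply, mul_ite, mul_one, mul_zero]

lemma pd2y1_Laff (hA : ∀ α i j, Differentiable ℝ (A α i j)) (hL0 : Differentiable ℝ L0)
    (β : Fin m) (k : Fin n) (p : J2S n m) :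
    pd2y1 (Laff A L0) β k p =
      (∑ α, ∑ i, ∑ j, p.2.2.2 α i j * pd1y1 (A α i j) β k (pr21 p))
        + pd1y1 L0 β k (pr21 p) := by
  unfold pd2y1 pd1y1
  rw [(hasFDerivAt_Laff A L0 hA hL0 p).fderiv]
  simp only [ContinuousLinearMap.add_apply, ContinuousLinearMap.coe_sum',
    Finset.sum_apply, ContinuousLinearMap.smul_apply, ContinuousLinearMap.comp_apply,
    smul_eq_mul, cY2_apply]
  rw [show pi21 ((0, 0, Pi.single β (Pi.single k (1:ℝ)), 0) : J2S n m)
      = ((0, 0, Pi.single β (Pi.single k (1:ℝ))) : J1S n m) from rfl]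
  norm_num

lemma pd2y_Laff (hA : ∀ α i j, Differentiable ℝ (A α i j)) (hL0 : Differentiable ℝ L0)
    (β : Fin m) (p : J2S n m) :
    pd2y (Laff A L0) β p =
      (∑ α, ∑ i, ∑ j, p.2.2.2 α i j * pd1y (A α i j) β (pr21 p))
        + pd1y L0 β (pr21 p) := by
  unfold pd2y pd1y
  rw [(hasFDerivAt_Laff A L0 hA hL0 p).fderiv]
  simp only [ContinuousLinearMap.add_apply, ContinuousLinearMap.coe_sum',
    Finset.sum_apply, ContinuousLinearMap.smul_apply, ContinuousLinearMap.comp_apply,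
    smul_eq_mul, cY2_apply]
  rw [show pi21 ((0, Pi.single β (1:ℝ), 0, 0) : J2S n m)
      = ((0, Pi.single β (1:ℝ), 0) : J1S n m) from rfl]
  norm_num

lemma pd2x_Laff (hA : ∀ α i j, Differentiable ℝ (A α i j)) (hL0 : Differentiable ℝ L0)
    (k : Fin n) (p : J2S n m) :
    pd2x (Laff A L0) k p =
      (∑ α, ∑ i, ∑ j, p.2.2.2 α i j * pd1x (A α i j) k (pr21 p))
        + pd1x L0 k (pr21 p) := by
  unfold pd2x pd1x
  rw [(hasFDerivAt_Laff A L0 hA hL0 p).fderiv]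
  simp only [ContinuousLinearMap.add_apply, ContinuousLinearMap.coe_sum',
    Finset.sum_apply, ContinuousLinearMap.smul_apply, ContinuousLinearMap.comp_apply,
    smul_eq_mul, cY2_apply]
  rw [show pi21 ((Pi.single k (1:ℝ), 0, 0, 0) : J2S n m)
      = ((Pi.single k (1:ℝ), 0, 0) : J1S n m) from rfl]
  norm_num

end Aux2
section Aux3

variable {n m : ℕ} {A : Fin m → Fin n → Fin n → J1S n m → ℝ} {L0 : J1S n m → ℝ}

lemma Lc2_Laff (hA : ∀ α i j, Differentiable ℝ (A α i j)) (hL0 : Differentiable ℝ L0)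
    (α : Fin m) (i j : Fin n) (p : J2S n m) :
    Lc2 (Laff A L0) α i j p = A α i j (pr21 p) :=
  pd2y2_Laff hA hL0 α i j p

lemma Lc0_Laff (hA : ∀ α i j, Differentiable ℝ (A α i j)) (hL0 : Differentiable ℝ L0)
    (α : Fin m) (i : Fin n) (p : J3S n m) :
    Lc0 (Laff A L0) α i p =
      ((∑ β, ∑ h, ∑ j, p.2.2.2.1 β h j * pd1y1 (A β h j) α i (pr31 p))
        + pd1y1 L0 α i (pr31 p))
      - ∑ j, (pd1x (A α i j) j (pr31 p)
          + (∑ β, p.2.2.1 β j * pd1y (A α i j) β (pr31 p))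
          + ∑ β, ∑ k, p.2.2.2.1 β k j * pd1y1 (A α i j) β k (pr31 p)) := by
  unfold Lc0
  have hLc2 : ∀ j, (fun q => Lc2 (Laff A L0) α i j q) = fun q => A α i j (pr21 q) :=
    fun j => funext fun q => Lc2_Laff hA hL0 α i j q
  have h1 : pd2y1 (Laff A L0) α i (pr32 p) =
      (∑ β, ∑ h, ∑ j, p.2.2.2.1 β h j * pd1y1 (A β h j) α i (pr31 p))
        + pd1y1 L0 α i (pr31 p) := by
    rw [pd2y1_Laff hA hL0 α i (pr32 p)]; rfl
  have h2 : ∀ j, TD2 (fun q => Lc2 (Laff A L0) α i j q) j p =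
      pd1x (A α i j) j (pr31 p)
        + (∑ β, p.2.2.1 β j * pd1y (A α i j) β (pr31 p))
        + ∑ β, ∑ k, p.2.2.2.1 β k j * pd1y1 (A α i j) β k (pr31 p) := by
    intro j
    rw [hLc2 j]
    unfold TD2
    rw [pd2x_comp21 _ (hA α i j)]
    have hy : ∀ β, pd2y (fun q => A α i j (pr21 q)) β (pr32 p)
        = pd1y (A α i j) β (pr31 p) := fun β => pd2y_comp21 _ (hA α i j) β (pr32 p)
    have hy1 : ∀ β k, pd2y1 (fun q => A α i j (pr21 q)) β k (pr32 p)
        = pd1y1 (A α i j) β k (pr31 p) := fun β k => pd2y1_comp21 _ (hA α i j) β k (pr32 p)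
    have hy2 : ∀ β k l, pd2y2 (fun q => A α i j (pr21 q)) β k l (pr32 p) = 0 :=
      fun β k l => pd2y2_comp21 _ (hA α i j) β k l (pr32 p)
    simp only [hy, hy1, hy2, mul_zero, Finset.sum_const_zero, add_zero]
    rfl
  rw [h1, Finset.sum_congr rfl fun j _ => h2 j]

/-- Affine reconstruction: if the second fibre derivatives are independent of the
second-order coordinates, `L` is affine in them. -/
lemma affine_of_const_pd (L : J2S n m → ℝ) (hL : ContDiff ℝ (⊤ : ℕ∞) L)
    (key : ∀ α i j (p : J2S n m),
      pd2y2 L α i j p = pd2y2 L α i j (p.1, p.2.1, p.2.2.1, 0)) (p : J2S n m) :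
    L p = (∑ α, ∑ i, ∑ j, pd2y2 L α i j (p.1, p.2.1, p.2.2.1, 0) * p.2.2.2 α i j)
      + L (p.1, p.2.1, p.2.2.1, 0) := by
  obtain ⟨x, y, y1, y2⟩ := p
  simp only
  set c : ℝ := ∑ α, ∑ i, ∑ j, pd2y2 L α i j (x, y, y1, 0) * y2 α i j with hc
  set φ : ℝ → ℝ := fun t => L (x, y, y1, t • y2) with hφ
  have hdir : ∀ t : ℝ, ((0, 0, 0, y2) : J2S n m)
      = ∑ α, ∑ i, ∑ j, y2 α i j •
        ((0, 0, 0, Pi.single α (Pi.single i (Pi.single j (1:ℝ)))) : J2S n m) := by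
    intro t
    have h4 := y2_decomp y2
    refine Prod.ext ?_ (Prod.ext ?_ (Prod.ext ?_ ?_)) <;>
      simp [Prod.fst_sum, Prod.snd_sum, Finset.sum_apply, smul_zero] <;>
      try exact congrArg _ h4
    · exact h4.trans (by simp [Prod.snd_sum, Prod.fst_sum])
  have hd : ∀ t : ℝ, HasDerivAt φ c t := by
    intro t
    have h1 : HasDerivAt (fun t : ℝ => t • y2) ((1:ℝ) • y2) t :=
      (hasDerivAt_id t).smul_const y2
    rw [one_smul] at h1
    have hγ : HasDerivAt (fun t : ℝ => ((x, y, y1, t • y2) : J2S n m))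
        (((0, 0, 0, y2)) : J2S n m) t :=
      (hasDerivAt_const t x).prodMk ((hasDerivAt_const t y).prodMk
        ((hasDerivAt_const t y1).prodMk h1))
    have hcomp := (hL.differentiable (by simp) _).hasFDerivAt.comp_hasDerivAt t hγ
    refine hcomp.congr_deriv ?_
    symm
    rw [hdir t, map_sum]
    rw [hc]
    refine Finset.sum_congr rfl fun α _ => ?_
    rw [map_sum]
    refine Finset.sum_congr rfl fun i _ => ?_
    rw [map_sum]
    refine Finset.sum_congr rfl fun j _ => ?_
    rw [map_smul, smul_eq_mul, mul_comm]
    congr 1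
    have := key α i j ((x, y, y1, t • y2) : J2S n m)
    unfold pd2y2 at this ⊢
    exact this.symm
  have hψ : ∀ t : ℝ, HasDerivAt (fun t => φ t - c * t) 0 t := by
    intro t
    have h := (hd t).sub ((hasDerivAt_id' t).const_mul c)
    rw [mul_one, sub_self] at h
    exact h
  have hconst := is_const_of_deriv_eq_zero (f := fun t => φ t - c * t)
    (fun t => (hψ t).differentiableAt) (fun t => (hψ t).deriv) 1 0
  simp only [mul_one, mul_zero, sub_zero] at hconst
  have hφ1 : φ 1 = L (x, y, y1, y2) := by rw [hφ]; simp
  have hφ0 : φ 0 = L (x, y, y1, 0) := by rw [hφ]; simp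
  rw [hφ1, hφ0] at hconst
  linarith

end Aux3
section Aux4

variable {n m : ℕ} {A : Fin m → Fin n → Fin n → J1S n m → ℝ} {L0 : J1S n m → ℝ}

lemma single_collapse_right (X : Fin m → Fin n → Fin n → ℝ) (β : Fin m) (h j : Fin n) :
    ∑ a, ∑ b, ∑ c, X a b c * (Pi.single β (Pi.single h (Pi.single j (1:ℝ)) :
      Fin n → Fin n → ℝ) : Fin m → Fin n → Fin n → ℝ) a b c = X β h j := by
  simp [Pi.single_apply, ite_apply, Pi.zero_apply, mul_ite, mul_zero, mul_one]

lemma Laff_single (q : J1S n m) (α : Fin m) (i j : Fin n) :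
    Laff A L0 ((q.1, q.2.1, q.2.2,
      Pi.single α (Pi.single i (Pi.single j (1:ℝ)))) : J2S n m) = A α i j q + L0 q := by
  unfold Laff
  congr 1
  exact single_collapse_right (fun a b c => A a b c q) α i j

lemma transpose_single (α : Fin m) (i j : Fin n) :
    (fun a b c => (Pi.single α (Pi.single i (Pi.single j (1:ℝ)) : Fin n → Fin n → ℝ) :
        Fin m → Fin n → Fin n → ℝ) a c b)
      = (Pi.single α (Pi.single j (Pi.single i (1:ℝ)) : Fin n → Fin n → ℝ) :
        Fin m → Fin n → Fin n → ℝ) := by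
  funext a b c
  by_cases ha : a = α <;> by_cases hb : b = j <;> by_cases hc : c = i <;>
    simp [Pi.single_apply, ha, hb, hc]

end Aux4
/-- Proposition 1: the Poincaré–Cartan form of a second-order
Lagrangian density `Λ = L·v` projects onto `J¹E` if and only if `L` is affine with
respect to the affine structure of `p²₁ : J²E → J¹E` and the symmetry equations
`∂L_β^{ih}/∂y_a^α = ∂L_α^{ia}/∂y_h^β` hold. -/
theorem statement0 {n m : ℕ} (L : J2S n m → ℝ) (hL : ContDiff ℝ (⊤ : ℕ∞) L)
    (hLsym : SymL2 L) :
    PCProjectsJ1 L ↔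
      ∃ (A : Fin m → Fin n → Fin n → J1S n m → ℝ) (L0 : J1S n m → ℝ),
        (∀ α i j, ContDiff ℝ (⊤ : ℕ∞) (A α i j)) ∧ ContDiff ℝ (⊤ : ℕ∞) L0 ∧
          IsAffine L A L0 ∧ SymmCond A := by
  constructor
  · rintro ⟨hLc0, hLc2, -⟩
    set A : Fin m → Fin n → Fin n → J1S n m → ℝ :=
      fun α i j q => pd2y2 L α i j ((q.1, q.2.1, q.2.2, 0) : J2S n m) with hAdef
    set L0 : J1S n m → ℝ := fun q => L ((q.1, q.2.1, q.2.2, 0) : J2S n m) with hL0def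
    have hι : ContDiff ℝ (⊤ : ℕ∞) (fun q : J1S n m => ((q.1, q.2.1, q.2.2, 0) : J2S n m)) := by
      fun_prop
    have hAc : ∀ α i j, ContDiff ℝ (⊤ : ℕ∞) (A α i j) := by
      intro α i j
      have hF : ContDiff ℝ (⊤ : ℕ∞) (fderiv ℝ L) := hL.fderiv_right (by simp)
      exact (hF.comp hι).clm_apply contDiff_const
    have hL0c : ContDiff ℝ (⊤ : ℕ∞) L0 := hL.comp hι
    have hAd : ∀ α i j, Differentiable ℝ (A α i j) :=
      fun α i j => (hAc α i j).differentiable (by simp)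
    have hL0d : Differentiable ℝ L0 := hL0c.differentiable (by simp)
    have key : ∀ α i j (p : J2S n m), pd2y2 L α i j p = A α i j (pr21 p) := by
      intro α i j p
      obtain ⟨g, hg⟩ := hLc2 α i j
      have h1 := hg p
      have h2 := hg ((p.1, p.2.1, p.2.2.1, 0) : J2S n m)
      unfold Lc2 at h1 h2
      show pd2y2 L α i j p = pd2y2 L α i j ((p.1, p.2.1, p.2.2.1, 0) : J2S n m)
      rw [h1, h2]
      rfl
    have haff : ∀ p, L p = Laff A L0 p := by
      intro p
      exact affine_of_const_pd L hL (fun α i j p => by rw [key α i j p]; rfl) p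
    have hsymA : ∀ α i j q, A α i j q = A α j i q := by
      intro α i j q
      have h1 := haff ((q.1, q.2.1, q.2.2,
        Pi.single α (Pi.single i (Pi.single j (1:ℝ)))) : J2S n m)
      have h2 := haff ((q.1, q.2.1, q.2.2,
        Pi.single α (Pi.single j (Pi.single i (1:ℝ)))) : J2S n m)
      rw [Laff_single] at h1 h2
      have hs := hLsym q.1 q.2.1 q.2.2 (Pi.single α (Pi.single i (Pi.single j (1:ℝ))))
      rw [transpose_single] at hs
      rw [h1, h2] at hs
      linarith
    have hLeq : L = Laff A L0 := funext haff
    have hE : ∀ (β : Fin m) (h j : Fin n) (α : Fin m) (i : Fin n) (q : J1S n m),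
        pd1y1 (A β h j) α i q = pd1y1 (A α i j) β h q := by
      intro β h j α i q
      obtain ⟨g, hg⟩ := hLc0 α i
      rw [hLeq] at hg
      have h1 := hg ((q.1, q.2.1, q.2.2,
        Pi.single β (Pi.single h (Pi.single j (1:ℝ))), 0) : J3S n m)
      have h0 := hg ((q.1, q.2.1, q.2.2, 0, 0) : J3S n m)
      rw [Lc0_Laff hAd hL0d] at h1 h0
      dsimp only at h1 h0
      simp only [Finset.sum_add_distrib] at h1 h0
      have hpr : (pr31 ((q.1, q.2.1, q.2.2, 0, 0) : J3S n m)) = q := rfl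
      rw [hpr] at h0
      have hpr1 : (pr31 ((q.1, q.2.1, q.2.2,
        Pi.single β (Pi.single h (Pi.single j (1:ℝ))), 0) : J3S n m)) = q := rfl
      rw [hpr1] at h1
      rw [single_collapse (fun a b c => pd1y1 (A a b c) α i q) β h j,
        single_collapse' (fun a b c => pd1y1 (A α i c) a b q) β h j] at h1
      simp only [Pi.zero_apply, zero_mul, Finset.sum_const_zero, add_zero] at h0
      linarith
    have hS : ∀ (β : Fin m) (h j : Fin n) (α : Fin m) (i : Fin n) (q : J1S n m),
        pd1y1 (A β h j) α i q = pd1y1 (A β j h) α i q := by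
      intro β h j α i q
      have : A β h j = A β j h := funext fun q => hsymA β h j q
      rw [this]
    refine ⟨A, L0, hAc, hL0c, ⟨hsymA, fun p => haff p⟩, ?_⟩
    intro a h i α β q
    calc pd1y1 (A β i h) α a q = pd1y1 (A β h i) α a q := hS β i h α a q
      _ = pd1y1 (A α a i) β h q := hE β h i α a q
      _ = pd1y1 (A α i a) β h q := hS α a i β h q
  · rintro ⟨A, L0, hAc, hL0c, ⟨hAsym, haff⟩, hsc⟩
    have hAd : ∀ α i j, Differentiable ℝ (A α i j) :=
      fun α i j => (hAc α i j).differentiable (by simp)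
    have hL0d : Differentiable ℝ L0 := hL0c.differentiable (by simp)
    have hLeq : L = Laff A L0 := funext fun p => haff p
    have hS : ∀ (β : Fin m) (h j : Fin n) (α : Fin m) (i : Fin n) (q : J1S n m),
        pd1y1 (A β h j) α i q = pd1y1 (A β j h) α i q := by
      intro β h j α i q
      have : A β h j = A β j h := funext fun q => hAsym β h j q
      rw [this]
    have hE : ∀ (β : Fin m) (h j : Fin n) (α : Fin m) (i : Fin n) (q : J1S n m),
        pd1y1 (A β h j) α i q = pd1y1 (A α i j) β h q := by
      intro β h j α i q
      calc pd1y1 (A β h j) α i q = pd1y1 (A β j h) α i q := hS β h j α i q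
        _ = pd1y1 (A α j i) β h q := hsc i h j α β q
        _ = pd1y1 (A α i j) β h q := hS α j i β h q
    have hLc0v : ∀ α i (p : J3S n m), Lc0 L α i p =
        pd1y1 L0 α i (pr31 p) - ∑ j, (pd1x (A α i j) j (pr31 p)
          + ∑ β, (pr31 p).2.2 β j * pd1y (A α i j) β (pr31 p)) := by
      intro α i p
      rw [hLeq, Lc0_Laff hAd hL0d]
      have hsum : (∑ β, ∑ h, ∑ j, p.2.2.2.1 β h j * pd1y1 (A β h j) α i (pr31 p))
          = ∑ j, ∑ β, ∑ k, p.2.2.2.1 β k j * pd1y1 (A α i j) β k (pr31 p) := by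
        calc (∑ β, ∑ h, ∑ j, p.2.2.2.1 β h j * pd1y1 (A β h j) α i (pr31 p))
            = ∑ β, ∑ h, ∑ j, p.2.2.2.1 β h j * pd1y1 (A α i j) β h (pr31 p) := by
              refine Finset.sum_congr rfl fun β _ => Finset.sum_congr rfl fun h _ =>
                Finset.sum_congr rfl fun j _ => ?_
              rw [hE β h j α i (pr31 p)]
          _ = ∑ β, ∑ j, ∑ h, p.2.2.2.1 β h j * pd1y1 (A α i j) β h (pr31 p) := by
              exact Finset.sum_congr rfl fun β _ => Finset.sum_comm
          _ = ∑ j, ∑ β, ∑ h, p.2.2.2.1 β h j * pd1y1 (A α i j) β h (pr31 p) :=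
              Finset.sum_comm
      rw [hsum]
      have hq : (pr31 p).2.2 = p.2.2.1 := rfl
      rw [hq]
      rw [Finset.sum_add_distrib]
      ring
    refine ⟨fun α i => ⟨fun q => pd1y1 L0 α i q - ∑ j, (pd1x (A α i j) j q
        + ∑ β, q.2.2 β j * pd1y (A α i j) β q), fun p => hLc0v α i p⟩,
      fun α i j => ⟨A α i j, fun p => by rw [hLeq]; exact Lc2_Laff hAd hL0d α i j p⟩, ?_⟩
    refine ⟨fun q => L0 q - ∑ α, ∑ i, q.2.2 α i * (pd1y1 L0 α i q
      - ∑ j, (pd1x (A α i j) j q + ∑ β, q.2.2 β j * pd1y (A α i j) β q)), fun p => ?_⟩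
    unfold Hterm
    simp only [hLc0v]
    rw [hLeq]
    have hLc2v : ∀ (α : Fin m) (h i : Fin n), Lc2 (Laff A L0) α h i (pr32 p)
        = A α h i (pr31 p) := fun α h i => Lc2_Laff hAd hL0d α h i (pr32 p)
    simp only [hLc2v]
    have hL32 : Laff A L0 (pr32 p)
        = (∑ α, ∑ i, ∑ j, A α i j (pr31 p) * p.2.2.2.1 α i j) + L0 (pr31 p) := rfl
    rw [hL32]
    have hq : (pr31 p).2.2 = p.2.2.1 := rfl
    rw [hq]
    have hAcomm : (∑ α, ∑ h, ∑ i, p.2.2.2.1 α h i * A α h i (pr31 p))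
        = ∑ α, ∑ i, ∑ j, A α i j (pr31 p) * p.2.2.2.1 α i j :=
      Finset.sum_congr rfl fun α _ => Finset.sum_congr rfl fun h _ =>
        Finset.sum_congr rfl fun i _ => mul_comm _ _
    rw [hAcomm]
    ring
end
end

section
/- Let L be a second-order affine Lagrangian L = L_α^{ij}·y^α_{(ij)} + L₀ with L_α^{ij}, L₀ ∈ C^∞(J¹E) and L_α^{ij} = L_α^{ji}. Then its Euler–Lagrange equations, which are a priori of third order, are of second order if and only if the equations ∂L_β^{ih}/∂y_a^α = ∂L_α^{ia}/∂y_h^β hold for all a,h,i = 1,…,n and α,β = 1,…,m. -/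
noncomputable section

open scoped BigOperators

variable {n m : ℕ}

/-- Coordinate model of `J⁴E`. -/
abbrev J4S (n m : ℕ) := (Fin n → ℝ) × (Fin m → ℝ) × (Fin m → Fin n → ℝ) ×
  (Fin m → Fin n → Fin n → ℝ) × (Fin m → Fin n → Fin n → Fin n → ℝ) ×
  (Fin m → Fin n → Fin n → Fin n → Fin n → ℝ)

variable {n m : ℕ}

def pr42 (p : J4S n m) : J2S n m := (p.1, p.2.1, p.2.2.1, p.2.2.2.1)
def pr43 (p : J4S n m) : J3S n m := (p.1, p.2.1, p.2.2.1, p.2.2.2.1, p.2.2.2.2.1)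

def pd3x (f : J3S n m → ℝ) (i : Fin n) (p : J3S n m) : ℝ :=
  fderiv ℝ f p (Pi.single i 1, 0, 0, 0, 0)

def pd3y (f : J3S n m → ℝ) (α : Fin m) (p : J3S n m) : ℝ :=
  fderiv ℝ f p (0, Pi.single α 1, 0, 0, 0)

def pd3y1 (f : J3S n m → ℝ) (α : Fin m) (i : Fin n) (p : J3S n m) : ℝ :=
  fderiv ℝ f p (0, 0, Pi.single α (Pi.single i 1), 0, 0)

def pd3y2 (f : J3S n m → ℝ) (α : Fin m) (i j : Fin n) (p : J3S n m) : ℝ :=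
  fderiv ℝ f p (0, 0, 0, Pi.single α (Pi.single i (Pi.single j 1)), 0)

def pd3y3 (f : J3S n m → ℝ) (α : Fin m) (i j k : Fin n) (p : J3S n m) : ℝ :=
  fderiv ℝ f p (0, 0, 0, 0, Pi.single α (Pi.single i (Pi.single j (Pi.single k 1))))

/-- Total derivative `D_j f` of a function `f` on `J³E`, as a function on `J⁴E`. -/
def TD3 (f : J3S n m → ℝ) (j : Fin n) (p : J4S n m) : ℝ :=
  pd3x f j (pr43 p) + ∑ α, p.2.2.1 α j * pd3y f α (pr43 p)
    + ∑ α, ∑ k, p.2.2.2.1 α k j * pd3y1 f α k (pr43 p)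
    + ∑ α, ∑ k, ∑ l, p.2.2.2.2.1 α k l j * pd3y2 f α k l (pr43 p)
    + ∑ α, ∑ k, ∑ l, ∑ r, p.2.2.2.2.2 α k l r j * pd3y3 f α k l r (pr43 p)

/-- The Euler–Lagrange operator `E_α(L) = ∂L/∂y^α − D_i(L_α^{i0})` of a
second-order Lagrangian, a function on `J⁴E`. -/
def ELop (L : J2S n m → ℝ) (α : Fin m) (p : J4S n m) : ℝ :=
  pd2y L α (pr42 p) - ∑ i, TD3 (fun q => Lc0 L α i q) i p

def FactorsJ2of4 (f : J4S n m → ℝ) : Prop :=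
  ∃ g : J2S n m → ℝ, ∀ p, f p = g (pr42 p)


/- ### Auxiliary development -/

theorem lineDer {E : Type*} [NormedAddCommGroup E] [NormedSpace ℝ E]
    {f : E → ℝ} {p : E} (h : DifferentiableAt ℝ f p) (v : E) :
    HasDerivAt (fun t : ℝ => f (p + t • v)) (fderiv ℝ f p v) 0 := by
  have hg : HasDerivAt (fun t : ℝ => p + t • v) v 0 := by
    simpa using ((hasDerivAt_id (0:ℝ)).smul_const v).const_add p
  have h' : HasFDerivAt f (fderiv ℝ f p) ((fun t : ℝ => p + t • v) 0) := by
    simpa using h.hasFDerivAt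
  exact h'.comp_hasDerivAt 0 hg

theorem fderiv_line' {E : Type*} [NormedAddCommGroup E] [NormedSpace ℝ E]
    {f : E → ℝ} {p : E} (h : DifferentiableAt ℝ f p) {v : E} {D : ℝ}
    (hD : HasDerivAt (fun t : ℝ => f (p + t • v)) D 0) :
    fderiv ℝ f p v = D := (lineDer h v).unique hD

theorem pdDiff {E F : Type*} [NormedAddCommGroup E] [NormedSpace ℝ E]
    [NormedAddCommGroup F] [NormedSpace ℝ F] {f : E → F} (hf : ContDiff ℝ (⊤ : ℕ∞) f) (v : E) :
    Differentiable ℝ (fun x => fderiv ℝ f x v) := by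
  have h1 : ContDiff ℝ (⊤:ℕ∞) (fderiv ℝ f) := hf.fderiv_right (by simp)
  exact (h1.clm_apply contDiff_const).differentiable (by simp)

theorem diff_pr21 : Differentiable ℝ (pr21 : J2S n m → J1S n m) := by
  unfold pr21; fun_prop

theorem diff_pr32 : Differentiable ℝ (pr32 : J3S n m → J2S n m) := by
  unfold pr32; fun_prop

def wAff (c : Fin m → Fin n → Fin n → J1S n m → ℝ) (g : J1S n m → ℝ) : J2S n m → ℝ :=
  fun q => (∑ α, ∑ i, ∑ j, c α i j (pr21 q) * q.2.2.2 α i j) + g (pr21 q)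

section wAffLemmas

variable {c : Fin m → Fin n → Fin n → J1S n m → ℝ} {g : J1S n m → ℝ}

theorem wAff_diff (hc : ∀ b k l, Differentiable ℝ (c b k l)) (hg : Differentiable ℝ g) :
    Differentiable ℝ (wAff c g) := by
  unfold wAff pr21; fun_prop

theorem wAff_fderiv (hc : ∀ b k l, Differentiable ℝ (c b k l)) (hg : Differentiable ℝ g)
    (q : J2S n m) (v1 : J1S n m) (v2 : Fin m → Fin n → Fin n → ℝ) :
    fderiv ℝ (wAff c g) q ((v1.1, v1.2.1, v1.2.2, v2) : J2S n m) =
      (∑ b, ∑ k, ∑ l, (fderiv ℝ (c b k l) (pr21 q) v1 * q.2.2.2 b k l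
        + c b k l (pr21 q) * v2 b k l)) + fderiv ℝ g (pr21 q) v1 := by
  obtain ⟨va, vb, vc⟩ := v1
  apply fderiv_line' ((wAff_diff hc hg) q)
  have key : (fun t : ℝ => wAff c g (q + t • ((va, vb, vc, v2) : J2S n m))) =
      fun t => (∑ b, ∑ k, ∑ l, c b k l (pr21 q + t • ((va, vb, vc) : J1S n m))
          * (q.2.2.2 b k l + t * v2 b k l))
        + g (pr21 q + t • ((va, vb, vc) : J1S n m)) := by
    funext t
    simp [wAff, pr21, Prod.fst_add, Prod.snd_add, Prod.smul_fst, Prod.smul_snd,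
      smul_eq_mul, Prod.mk_add_mk, Prod.smul_mk]
  rw [key]
  apply HasDerivAt.add
  · apply HasDerivAt.fun_sum; intro b _
    apply HasDerivAt.fun_sum; intro k _
    apply HasDerivAt.fun_sum; intro l _
    have hc' := lineDer (hc b k l (pr21 q)) (((va, vb, vc) : J1S n m))
    have hw : HasDerivAt (fun t : ℝ => q.2.2.2 b k l + t * v2 b k l) (v2 b k l) 0 := by
      simpa using ((hasDerivAt_id (0:ℝ)).mul_const (v2 b k l)).const_add (q.2.2.2 b k l)
    simpa using hc'.fun_mul hw
  · exact lineDer (hg _) (((va, vb, vc) : J1S n m))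

theorem wAff_pd2x (hc : ∀ b k l, Differentiable ℝ (c b k l)) (hg : Differentiable ℝ g)
    (j : Fin n) (q : J2S n m) :
    pd2x (wAff c g) j q =
      (∑ b, ∑ k, ∑ l, pd1x (c b k l) j (pr21 q) * q.2.2.2 b k l) + pd1x g j (pr21 q) := by
  have := wAff_fderiv hc hg q ((Pi.single j 1, 0, 0) : J1S n m) 0
  simpa [pd2x, pd1x] using this

theorem wAff_pd2y (hc : ∀ b k l, Differentiable ℝ (c b k l)) (hg : Differentiable ℝ g)
    (α : Fin m) (q : J2S n m) :
    pd2y (wAff c g) α q =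
      (∑ b, ∑ k, ∑ l, pd1y (c b k l) α (pr21 q) * q.2.2.2 b k l) + pd1y g α (pr21 q) := by
  have := wAff_fderiv hc hg q ((0, Pi.single α 1, 0) : J1S n m) 0
  simpa [pd2y, pd1y] using this

theorem wAff_pd2y1 (hc : ∀ b k l, Differentiable ℝ (c b k l)) (hg : Differentiable ℝ g)
    (α : Fin m) (i : Fin n) (q : J2S n m) :
    pd2y1 (wAff c g) α i q =
      (∑ b, ∑ k, ∑ l, pd1y1 (c b k l) α i (pr21 q) * q.2.2.2 b k l) + pd1y1 g α i (pr21 q) := by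
  have := wAff_fderiv hc hg q ((0, 0, Pi.single α (Pi.single i 1)) : J1S n m) 0
  simpa [pd2y1, pd1y1] using this

theorem wAff_pd2y2 (hc : ∀ b k l, Differentiable ℝ (c b k l)) (hg : Differentiable ℝ g)
    (α : Fin m) (i j : Fin n) (q : J2S n m) :
    pd2y2 (wAff c g) α i j q = c α i j (pr21 q) := by
  have := wAff_fderiv hc hg q (0 : J1S n m) (Pi.single α (Pi.single i (Pi.single j 1)))
  simpa [pd2y2, Pi.single_apply, ite_apply, Finset.sum_ite_eq'] using this

theorem fderiv_comp_pr21 (hg : Differentiable ℝ g) (q : J2S n m) (v : J2S n m) :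
    fderiv ℝ (fun r => g (pr21 r)) q v = fderiv ℝ g (pr21 q) (pr21 v) := by
  have hkey : ∀ t : ℝ, pr21 (q + t • v) = pr21 q + t • pr21 v := by
    intro t
    simp [pr21, Prod.ext_iff, Prod.fst_add, Prod.snd_add, Prod.smul_fst, Prod.smul_snd]
  apply fderiv_line' ((hg (pr21 q)).comp q (diff_pr21 q))
  simpa only [Function.comp_def, hkey] using lineDer (hg (pr21 q)) (pr21 v)

theorem fderiv_comp_pr32 {h : J2S n m → ℝ} (hh : Differentiable ℝ h)
    (p : J3S n m) (v : J3S n m) :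
    fderiv ℝ (fun r => h (pr32 r)) p v = fderiv ℝ h (pr32 p) (pr32 v) := by
  have hkey : ∀ t : ℝ, pr32 (p + t • v) = pr32 p + t • pr32 v := by
    intro t
    simp [pr32, Prod.ext_iff, Prod.fst_add, Prod.snd_add, Prod.smul_fst, Prod.smul_snd]
  apply fderiv_line' ((hh (pr32 p)).comp p (diff_pr32 p))
  simpa only [Function.comp_def, hkey] using lineDer (hh (pr32 p)) (pr32 v)

end wAffLemmas

/- ### Project-specific lemmas -/

def CC0 (A : Fin m → Fin n → Fin n → J1S n m → ℝ) (α : Fin m) (i : Fin n)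
    (β : Fin m) (k l : Fin n) (q1 : J1S n m) : ℝ :=
  pd1y1 (A β k l) α i q1 - pd1y1 (A α i l) β k q1

def GG0 (A : Fin m → Fin n → Fin n → J1S n m → ℝ) (L0 : J1S n m → ℝ)
    (α : Fin m) (i : Fin n) (q1 : J1S n m) : ℝ :=
  pd1y1 L0 α i q1 - ∑ j, (pd1x (A α i j) j q1 + ∑ β, q1.2.2 β j * pd1y (A α i j) β q1)

def hF0 (A : Fin m → Fin n → Fin n → J1S n m → ℝ) (L0 : J1S n m → ℝ)
    (α : Fin m) (i : Fin n) : J2S n m → ℝ :=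
  wAff (fun β k l => CC0 A α i β k l) (GG0 A L0 α i)

section Proj

variable {A : Fin m → Fin n → Fin n → J1S n m → ℝ} {L0 : J1S n m → ℝ}

theorem diff_CC0 (hA : ∀ b k l, ContDiff ℝ (⊤ : ℕ∞) (A b k l)) (α : Fin m) (i : Fin n)
    (β : Fin m) (k l : Fin n) : Differentiable ℝ (CC0 A α i β k l) := by
  have h1 := pdDiff (hA β k l) ((0, 0, Pi.single α (Pi.single i 1)) : J1S n m)
  have h2 := pdDiff (hA α i l) ((0, 0, Pi.single β (Pi.single k 1)) : J1S n m)
  exact h1.sub h2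

theorem diff_GG0 (hA : ∀ b k l, ContDiff ℝ (⊤ : ℕ∞) (A b k l)) (hL0 : ContDiff ℝ (⊤ : ℕ∞) L0)
    (α : Fin m) (i : Fin n) : Differentiable ℝ (GG0 A L0 α i) := by
  apply Differentiable.sub
  · exact pdDiff hL0 _
  · apply Differentiable.fun_sum
    intro j _
    apply Differentiable.add
    · exact pdDiff (hA α i j) _
    · apply Differentiable.fun_sum
      intro β _
      exact Differentiable.mul (by fun_prop) (pdDiff (hA α i j) _)

theorem diff_hF0 (hA : ∀ b k l, ContDiff ℝ (⊤ : ℕ∞) (A b k l)) (hL0 : ContDiff ℝ (⊤ : ℕ∞) L0)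
    (α : Fin m) (i : Fin n) : Differentiable ℝ (hF0 A L0 α i) :=
  wAff_diff (fun b k l => diff_CC0 hA α i b k l) (diff_GG0 hA hL0 α i)

theorem TD2_comp_pr21 {g : J1S n m → ℝ} (hg : Differentiable ℝ g) (j : Fin n) (p : J3S n m) :
    TD2 (fun q => g (pr21 q)) j p =
      pd1x g j (pr31 p) + ∑ β, p.2.2.1 β j * pd1y g β (pr31 p)
        + ∑ β, ∑ k, p.2.2.2.1 β k j * pd1y1 g β k (pr31 p) := by
  unfold TD2 pd2x pd2y pd2y1 pd2y2
  simp only [fderiv_comp_pr21 hg]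
  simp [pr21, pr31, pr32, pd1x, pd1y, pd1y1, Prod.mk_zero_zero]

theorem Lc2_eq (hA : ∀ b k l, ContDiff ℝ (⊤ : ℕ∞) (A b k l)) (hL0 : ContDiff ℝ (⊤ : ℕ∞) L0)
    {L : J2S n m → ℝ} (hLeq : L = wAff A L0) (α : Fin m) (i j : Fin n) :
    (fun q => Lc2 L α i j q) = fun q => A α i j (pr21 q) := by
  funext q
  have hA' : ∀ b k l, Differentiable ℝ (A b k l) := fun b k l => (hA b k l).differentiable (by simp)
  rw [hLeq]
  exact wAff_pd2y2 hA' (hL0.differentiable (by simp)) α i j q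

theorem Lc0_eq (hA : ∀ b k l, ContDiff ℝ (⊤ : ℕ∞) (A b k l)) (hL0 : ContDiff ℝ (⊤ : ℕ∞) L0)
    {L : J2S n m → ℝ} (hLeq : L = wAff A L0) (α : Fin m) (i : Fin n) (p : J3S n m) :
    Lc0 L α i p = hF0 A L0 α i (pr32 p) := by
  subst hLeq
  have hA' : ∀ b k l, Differentiable ℝ (A b k l) := fun b k l => (hA b k l).differentiable (by simp)
  have hL0' : Differentiable ℝ L0 := hL0.differentiable (by simp)
  have hTD : ∀ j, TD2 (fun q => Lc2 (wAff A L0) α i j q) j p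
      = pd1x (A α i j) j (pr31 p) + ∑ β, p.2.2.1 β j * pd1y (A α i j) β (pr31 p)
        + ∑ β, ∑ k, p.2.2.2.1 β k j * pd1y1 (A α i j) β k (pr31 p) := by
    intro j
    rw [Lc2_eq hA hL0 rfl α i j]
    exact TD2_comp_pr21 (hA' α i j) j p
  unfold Lc0
  rw [wAff_pd2y1 hA' hL0' α i (pr32 p)]
  simp only [hTD]
  unfold hF0 wAff CC0 GG0
  have hq1 : pr21 (pr32 p) = pr31 p := rfl
  have hw : (pr32 p).2.2.2 = p.2.2.2.1 := rfl
  rw [hq1, hw]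
  have hswap : ∑ j, ∑ β, ∑ k, p.2.2.2.1 β k j * pd1y1 (A α i j) β k (pr31 p)
      = ∑ β, ∑ k, ∑ l, pd1y1 (A α i l) β k (pr31 p) * p.2.2.2.1 β k l := by
    rw [Finset.sum_comm]
    refine Finset.sum_congr rfl fun β _ => ?_
    rw [Finset.sum_comm]
    exact Finset.sum_congr rfl fun k _ => Finset.sum_congr rfl fun j _ => mul_comm _ _
  simp only [sub_mul, Finset.sum_sub_distrib, Finset.sum_add_distrib, hswap,
    show (pr31 p).2.2 = p.2.2.1 from rfl]
  ring

theorem TD3_comp_pr32 {h : J2S n m → ℝ} (hh : Differentiable ℝ h) (j : Fin n) (p : J4S n m) :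
    TD3 (fun r => h (pr32 r)) j p =
      pd2x h j (pr42 p) + ∑ β, p.2.2.1 β j * pd2y h β (pr42 p)
        + ∑ β, ∑ k, p.2.2.2.1 β k j * pd2y1 h β k (pr42 p)
        + ∑ β, ∑ k, ∑ l, p.2.2.2.2.1 β k l j * pd2y2 h β k l (pr42 p) := by
  unfold TD3 pd3x pd3y pd3y1 pd3y2 pd3y3
  simp only [fderiv_comp_pr32 hh]
  simp [pr32, pr42, pr43, pd2x, pd2y, pd2y1, pd2y2, Prod.mk_zero_zero]

def KP0 (A : Fin m → Fin n → Fin n → J1S n m → ℝ) (L0 : J1S n m → ℝ)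
    (α : Fin m) (q2 : J2S n m) : ℝ :=
  pd2y (wAff A L0) α q2 - ∑ i, (pd2x (hF0 A L0 α i) i q2
    + ∑ β, q2.2.2.1 β i * pd2y (hF0 A L0 α i) β q2
    + ∑ β, ∑ k, q2.2.2.2 β k i * pd2y1 (hF0 A L0 α i) β k q2)

theorem ELform (hA : ∀ b k l, ContDiff ℝ (⊤ : ℕ∞) (A b k l)) (hL0 : ContDiff ℝ (⊤ : ℕ∞) L0)
    {L : J2S n m → ℝ} (hLeq : L = wAff A L0) (α : Fin m) (p : J4S n m) :
    ELop L α p = KP0 A L0 α (pr42 p)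
      - ∑ i, ∑ β, ∑ k, ∑ l, p.2.2.2.2.1 β k l i * CC0 A α i β k l (pr21 (pr42 p)) := by
  subst hLeq
  have hA' : ∀ b k l, Differentiable ℝ (A b k l) := fun b k l => (hA b k l).differentiable (by simp)
  have hL0' : Differentiable ℝ L0 := hL0.differentiable (by simp)
  have h1 : ∀ i, (fun q => Lc0 (wAff A L0) α i q) = fun q => hF0 A L0 α i (pr32 q) :=
    fun i => funext fun q => Lc0_eq hA hL0 rfl α i q
  have h2 : ∀ i, TD3 (fun q => hF0 A L0 α i (pr32 q)) i p
      = pd2x (hF0 A L0 α i) i (pr42 p) + ∑ β, p.2.2.1 β i * pd2y (hF0 A L0 α i) β (pr42 p)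
        + ∑ β, ∑ k, p.2.2.2.1 β k i * pd2y1 (hF0 A L0 α i) β k (pr42 p)
        + ∑ β, ∑ k, ∑ l, p.2.2.2.2.1 β k l i * CC0 A α i β k l (pr21 (pr42 p)) := by
    intro i
    rw [TD3_comp_pr32 (diff_hF0 hA hL0 α i) i p]
    congr 1
    refine Finset.sum_congr rfl fun β _ => Finset.sum_congr rfl fun k _ =>
      Finset.sum_congr rfl fun l _ => ?_
    rw [show pd2y2 (hF0 A L0 α i) β k l (pr42 p) = CC0 A α i β k l (pr21 (pr42 p)) from
      wAff_pd2y2 (fun b k' l' => diff_CC0 hA α i b k' l') (diff_GG0 hA hL0 α i) β k l (pr42 p)]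
  unfold ELop
  simp only [h1, h2, KP0, Finset.sum_add_distrib,
    show (pr42 p).2.2.1 = p.2.2.1 from rfl, show (pr42 p).2.2.2 = p.2.2.2.1 from rfl]
  ring

end Proj

/-- the Euler–Lagrange equations of a second-order affine
Lagrangian `L = L_α^{ij}·y_{(ij)}^α + L₀` (with `L_α^{ij}, L₀ ∈ C^∞(J¹E)`,
`L_α^{ij} = L_α^{ji}`), which are a priori of third order, are of second order if
and only if the symmetry equations `∂L_β^{ih}/∂y_a^α = ∂L_α^{ia}/∂y_h^β` hold. -/
theorem statement1 {n m : ℕ} (A : Fin m → Fin n → Fin n → J1S n m → ℝ)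
    (L0 : J1S n m → ℝ) (hA : ∀ α i j, ContDiff ℝ (⊤ : ℕ∞) (A α i j))
    (hL0 : ContDiff ℝ (⊤ : ℕ∞) L0)
    (hAsym : ∀ α i j q, A α i j q = A α j i q)
    (L : J2S n m → ℝ)
    (hL : ∀ p : J2S n m,
      L p = (∑ α, ∑ i, ∑ j, A α i j (pr21 p) * p.2.2.2 α i j) + L0 (pr21 p)) :
    (∀ α, FactorsJ2of4 (ELop L α)) ↔ SymmCond A := by
  have hLeq : L = wAff A L0 := funext hL
  have hAsw : ∀ x u v, A x u v = A x v u := fun x u v => funext (hAsym x u v)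
  have hR2 : ∀ (x : Fin m) (u v : Fin n) (b : Fin m) (w : Fin n) (q : J1S n m),
      pd1y1 (A x u v) b w q = pd1y1 (A x v u) b w q := fun x u v b w q => by
    rw [hAsw x u v]
  constructor
  · intro hFact
    have hCC : ∀ (α : Fin m) (i : Fin n) (β : Fin m) (k l : Fin n) (q1 : J1S n m),
        CC0 A α i β k l q1 = 0 := by
      intro α i β k l q1
      obtain ⟨g, hg⟩ := hFact α
      have e1 := hg ((q1.1, q1.2.1, q1.2.2, 0,
        Pi.single β (Pi.single k (Pi.single l (Pi.single i (1:ℝ)))), 0) : J4S n m)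
      have e0 := hg ((q1.1, q1.2.1, q1.2.2, 0, 0, 0) : J4S n m)
      rw [ELform hA hL0 hLeq] at e1 e0
      have e := e1.trans e0.symm
      have hq : ((q1.1, q1.2.1, q1.2.2) : J1S n m) = q1 := by
        simp
      simp only [pr42, pr21, hq] at e
      have eS := sub_right_injective e
      have e' : ∑ i', ∑ β', ∑ k', ∑ l',
          (Pi.single β (Pi.single k (Pi.single l (Pi.single i (1:ℝ)))) :
            Fin m → Fin n → Fin n → Fin n → ℝ) β' k' l' i' * CC0 A α i' β' k' l' q1 = 0 := by
        simpa using eS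
      simpa [Pi.single_apply, ite_apply, Finset.sum_ite_eq', mul_ite, ite_mul,
        mul_zero, zero_mul, mul_one] using e'
    have hR1 : ∀ (x : Fin m) (u : Fin n) (y : Fin m) (k l : Fin n) (q : J1S n m),
        pd1y1 (A y k l) x u q = pd1y1 (A x u l) y k q := fun x u y k l q =>
      sub_eq_zero.mp (hCC x u y k l q)
    intro a h i α β q
    calc pd1y1 (A β i h) α a q = pd1y1 (A α a h) β i q := hR1 α a β i h q
      _ = pd1y1 (A α h a) β i q := hR2 α a h β i q
      _ = pd1y1 (A β i a) α h q := hR1 β i α h a q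
      _ = pd1y1 (A β a i) α h q := hR2 β i a α h q
      _ = pd1y1 (A α h i) β a q := hR1 α h β a i q
      _ = pd1y1 (A α i h) β a q := hR2 α h i β a q
      _ = pd1y1 (A β a h) α i q := hR1 β a α i h q
      _ = pd1y1 (A β h a) α i q := hR2 β a h α i q
      _ = pd1y1 (A α i a) β h q := hR1 α i β h a q
  · intro hS α
    refine ⟨KP0 A L0 α, fun p => ?_⟩
    rw [ELform hA hL0 hLeq]
    have hCC : ∀ (i : Fin n) (β : Fin m) (k l : Fin n) (q1 : J1S n m),
        CC0 A α i β k l q1 = 0 := by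
      intro i β k l q1
      have hchain : pd1y1 (A β k l) α i q1 = pd1y1 (A α i l) β k q1 :=
        calc pd1y1 (A β k l) α i q1 = pd1y1 (A α k i) β l q1 := hS i l k α β q1
          _ = pd1y1 (A α i k) β l q1 := hR2 α k i β l q1
          _ = pd1y1 (A β i l) α k q1 := hS l k i β α q1
          _ = pd1y1 (A β l i) α k q1 := hR2 β i l α k q1
          _ = pd1y1 (A α l k) β i q1 := hS k i l α β q1
          _ = pd1y1 (A α k l) β i q1 := hR2 α l k β i q1
          _ = pd1y1 (A β k i) α l q1 := hS i l k β α q1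
          _ = pd1y1 (A β i k) α l q1 := hR2 β k i α l q1
          _ = pd1y1 (A α i l) β k q1 := hS l k i α β q1
      simpa [CC0, sub_eq_zero] using hchain
    simp [hCC]
end
end

section
/- Let Λ = Lv be a second-order Lagrangian density with Poincaré–Cartan form projectable onto J¹E. Then L̄ = L − D_i Lⁱ (total divergence difference), hence the Euler–Lagrange equations of the first-order Lagrangian L̄ = L₀ − ∂Lⁱ/∂xⁱ − y_i^α ∂Lⁱ/∂y^α coincide with the Euler–Lagrange equations of L: E_α(L) = E_α(L̄) for all α. -/
noncomputable section

open scoped BigOperators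

variable {n m : ℕ}

/-! ### Sections and jet prolongations -/

variable {n m : ℕ}

/-- First partial derivative `∂s^α/∂xⁱ` of a section `s : N → E`. -/
def ds1 (s : (Fin n → ℝ) → Fin m → ℝ) (α : Fin m) (i : Fin n) (x : Fin n → ℝ) : ℝ :=
  fderiv ℝ (fun x' => s x' α) x (Pi.single i 1)

def ds2 (s : (Fin n → ℝ) → Fin m → ℝ) (α : Fin m) (i j : Fin n) (x : Fin n → ℝ) : ℝ :=
  fderiv ℝ (fun x' => ds1 s α i x') x (Pi.single j 1)

def ds3 (s : (Fin n → ℝ) → Fin m → ℝ) (α : Fin m) (i j k : Fin n) (x : Fin n → ℝ) : ℝ :=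
  fderiv ℝ (fun x' => ds2 s α i j x') x (Pi.single k 1)

/-- The `1`-jet prolongation `j¹s`. -/
def j1sec (s : (Fin n → ℝ) → Fin m → ℝ) (x : Fin n → ℝ) : J1S n m :=
  (x, s x, fun α i => ds1 s α i x)

/-- The `2`-jet prolongation `j²s`. -/
def j2sec (s : (Fin n → ℝ) → Fin m → ℝ) (x : Fin n → ℝ) : J2S n m :=
  (x, s x, fun α i => ds1 s α i x, fun α i j => ds2 s α i j x)

/-- The `3`-jet prolongation `j³s`. -/
def j3sec (s : (Fin n → ℝ) → Fin m → ℝ) (x : Fin n → ℝ) : J3S n m :=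
  (x, s x, fun α i => ds1 s α i x, fun α i j => ds2 s α i j x,
    fun α i j k => ds3 s α i j k x)

/-- `s` is an extremal of the second-order density `Λ = L·v`: it satisfies the
Euler–Lagrange equations `E_α(L)∘js = ∂L/∂y^α∘j²s − ∂/∂xⁱ(L_α^{i0}∘j³s) = 0`. -/
def IsExtremal (L : J2S n m → ℝ) (s : (Fin n → ℝ) → Fin m → ℝ) : Prop :=
  ∀ (α : Fin m) (x : Fin n → ℝ),
    pd2y L α (j2sec s x) -
      (∑ i, fderiv ℝ (fun x' => Lc0 L α i (j3sec s x')) x (Pi.single i 1)) = 0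

-- generic Clairaut
lemma clairaut {E : Type*} [NormedAddCommGroup E] [NormedSpace ℝ E]
    (f : E → ℝ) (hf : ContDiff ℝ (⊤ : ℕ∞) f) (p v w : E) :
    fderiv ℝ (fun q => fderiv ℝ f q v) p w = fderiv ℝ (fun q => fderiv ℝ f q w) p v := by
  have hd : DifferentiableAt ℝ (fderiv ℝ f) p :=
    ((hf.fderiv_right (m := (⊤ : ℕ∞)) ((by simp))).differentiable (by simp)) p
  have h1 : ∀ u : E, fderiv ℝ (fun q => fderiv ℝ f q u) p
      = (fderiv ℝ (fderiv ℝ f) p).flip u := by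
    intro u
    have : (fun q => fderiv ℝ f q u) = fun q => (fderiv ℝ f q) u := rfl
    rw [this, fderiv_clm_apply hd (differentiableAt_const u)]
    ext w; simp
  have hsym := ((hf.contDiffAt (x := p)).isSymmSndFDerivAt ((by rw [minSmoothness_of_isRCLikeNormedField]; exact WithTop.coe_le_coe.2 (le_top : (2:ℕ∞) ≤ ⊤)))).eq v w
  rw [h1 v, h1 w]; simpa using hsym.symm

-- smoothness of directional derivative
lemma contDiff_dirderiv {E : Type*} [NormedAddCommGroup E] [NormedSpace ℝ E]
    (f : E → ℝ) (hf : ContDiff ℝ (⊤ : ℕ∞) f) (v : E) :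
    ContDiff ℝ (⊤ : ℕ∞) (fun q => fderiv ℝ f q v) := by
  exact (ContinuousLinearMap.apply ℝ ℝ v).contDiff.comp (hf.fderiv_right (by simp))

-- projection CLM
def P21 : J2S n m →L[ℝ] J1S n m :=
  (ContinuousLinearMap.fst ℝ _ _).prod
    ((((ContinuousLinearMap.fst ℝ _ _)).comp (ContinuousLinearMap.snd ℝ _ _)).prod
      (((ContinuousLinearMap.fst ℝ _ _)).comp
        (((ContinuousLinearMap.snd ℝ _ _)).comp (ContinuousLinearMap.snd ℝ _ _))))

@[simp] lemma P21_mk (a : Fin n → ℝ) (b : Fin m → ℝ) (c : Fin m → Fin n → ℝ)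
    (d : Fin m → Fin n → Fin n → ℝ) : (P21 ((a, b, c, d) : J2S n m) : J1S n m) = (a, b, c) := rfl

-- embedding
def E12 : J1S n m →L[ℝ] J2S n m :=
  (ContinuousLinearMap.fst ℝ _ _).prod
    ((((ContinuousLinearMap.fst ℝ _ _)).comp (ContinuousLinearMap.snd ℝ _ _)).prod
      ((((ContinuousLinearMap.snd ℝ _ _)).comp (ContinuousLinearMap.snd ℝ _ _)).prod 0))

-- coordinate CLMs
def c21 (β : Fin m) (i : Fin n) : J2S n m →L[ℝ] ℝ :=
  (ContinuousLinearMap.proj (R := ℝ) (φ := fun _ : Fin n => ℝ) i).comp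
    ((ContinuousLinearMap.proj (R := ℝ) (φ := fun _ : Fin m => Fin n → ℝ) β).comp
    ((ContinuousLinearMap.fst ℝ _ _).comp
      ((ContinuousLinearMap.snd ℝ _ _).comp (ContinuousLinearMap.snd ℝ _ _))))

lemma c21_apply (β : Fin m) (i : Fin n) (p : J2S n m) : c21 β i p = p.2.2.1 β i := rfl

def c22 (β : Fin m) (k i : Fin n) : J2S n m →L[ℝ] ℝ :=
  (ContinuousLinearMap.proj (R := ℝ) (φ := fun _ : Fin n => ℝ) i).comp
    ((ContinuousLinearMap.proj (R := ℝ) (φ := fun _ : Fin n => Fin n → ℝ) k).comp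
    ((ContinuousLinearMap.proj (R := ℝ) (φ := fun _ : Fin m => Fin n → Fin n → ℝ) β).comp
      ((ContinuousLinearMap.snd ℝ _ _).comp
        ((ContinuousLinearMap.snd ℝ _ _).comp (ContinuousLinearMap.snd ℝ _ _)))))

lemma c22_apply (β : Fin m) (k i : Fin n) (p : J2S n m) : c22 β k i p = p.2.2.2 β k i := rfl

def vx (n m : ℕ) (i : Fin n) : J1S n m := (Pi.single i 1, 0, 0)
def vy (n m : ℕ) (α : Fin m) : J1S n m := (0, Pi.single α 1, 0)
def vy1 (n m : ℕ) (α : Fin m) (i : Fin n) : J1S n m := (0, 0, Pi.single α (Pi.single i 1))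

def wy (n m : ℕ) (α : Fin m) : J2S n m := (0, Pi.single α 1, 0, 0)
def wy1 (n m : ℕ) (α : Fin m) (i : Fin n) : J2S n m := (0, 0, Pi.single α (Pi.single i 1), 0)
def wy2 (n m : ℕ) (α : Fin m) (i j : Fin n) : J2S n m :=
  (0, 0, 0, Pi.single α (Pi.single i (Pi.single j 1)))

lemma P21_wy (α : Fin m) : (P21 (wy n m α) : J1S n m) = vy n m α := rfl
lemma P21_wy1 (α : Fin m) (i : Fin n) : (P21 (wy1 n m α i) : J1S n m) = vy1 n m α i := rfl
lemma P21_wy2 (α : Fin m) (i j : Fin n) : (P21 (wy2 n m α i j) : J1S n m) = 0 := rfl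

-- decomposition of a J1S vector
lemma J1S_decomp (a : Fin n → ℝ) (w : Fin m → ℝ) (W : Fin m → Fin n → ℝ) :
    ((a, w, W) : J1S n m) = (∑ j, a j • vx n m j) + (∑ β, w β • vy n m β)
      + ∑ β, ∑ k, W β k • vy1 n m β k := by
  have h1 : (∑ j, a j • vx n m j) = ((a, 0, 0) : J1S n m) := by
    rw [Prod.ext_iff]; constructor
    · rw [Prod.fst_sum]
      funext t
      simp [vx, Finset.sum_apply, Pi.single_apply]
    · rw [Prod.snd_sum]
      simp [vx]
  have h2 : (∑ β, w β • vy n m β) = ((0, w, 0) : J1S n m) := by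
    rw [Prod.ext_iff]; constructor
    · rw [Prod.fst_sum]; simp [vy]
    · rw [Prod.snd_sum, Prod.ext_iff]
      constructor
      · rw [Prod.fst_sum]
        funext t
        simp [vy, Finset.sum_apply, Pi.single_apply]
      · rw [Prod.snd_sum]; simp [vy]
  have h3 : (∑ β, ∑ k, W β k • vy1 n m β k) = ((0, 0, W) : J1S n m) := by
    rw [Prod.ext_iff]; constructor
    · rw [Prod.fst_sum]; simp [Prod.fst_sum, vy1]
    · rw [Prod.snd_sum, Prod.ext_iff]
      constructor
      · simp [Prod.snd_sum, Prod.fst_sum, vy1]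
      · rw [Prod.snd_sum]
        funext b c
        simp only [Prod.snd_sum, vy1, Prod.smul_mk, smul_zero]
        rw [Finset.sum_apply]
        simp only [Finset.sum_apply, Pi.smul_apply, Pi.single_apply, smul_eq_mul]
        simp [ite_apply, Pi.single_apply, mul_ite, Finset.sum_ite_eq, Finset.sum_ite_eq']
  rw [h1, h2, h3]
  show _ = ((a+0+0 : Fin n → ℝ), ((0:Fin m → ℝ)+w+0, (0:Fin m → Fin n → ℝ)+0+W))
  simp

-- CLM evaluation decomposition
lemma clm_decomp (T : J1S n m →L[ℝ] ℝ) (a : Fin n → ℝ) (w : Fin m → ℝ)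
    (W : Fin m → Fin n → ℝ) :
    T (a, w, W) = (∑ j, a j * T (vx n m j)) + (∑ β, w β * T (vy n m β))
      + ∑ β, ∑ k, W β k * T (vy1 n m β k) := by
  rw [J1S_decomp]
  simp [map_sum, smul_eq_mul]


section AUX2
variable {n m : ℕ}

lemma fderiv_comp21 (g : J1S n m → ℝ) (p : J2S n m) (hg : DifferentiableAt ℝ g (pr21 p))
    (v : J2S n m) :
    fderiv ℝ (fun p' => g (pr21 p')) p v = fderiv ℝ g (pr21 p) (P21 v) := by
  have h : HasFDerivAt (fun p' => g (pr21 p')) ((fderiv ℝ g (pr21 p)).comp P21) p :=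
    (hg.hasFDerivAt.comp p P21.hasFDerivAt)
  rw [h.fderiv]; rfl

lemma hasFDerivAt_TD1 (f : J1S n m → ℝ) (hf : ContDiff ℝ (⊤ : ℕ∞) f) (i : Fin n) (p : J2S n m) :
    HasFDerivAt (fun p' : J2S n m => TD1 f i p')
      (((fderiv ℝ (fun q => fderiv ℝ f q (vx n m i)) (pr21 p)).comp P21
        + ∑ β, (p.2.2.1 β i • (fderiv ℝ (fun q => fderiv ℝ f q (vy n m β)) (pr21 p)).comp P21
            + (fderiv ℝ f (pr21 p) (vy n m β)) • c21 β i))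
        + ∑ β, ∑ k,
          (p.2.2.2 β k i • (fderiv ℝ (fun q => fderiv ℝ f q (vy1 n m β k)) (pr21 p)).comp P21
            + (fderiv ℝ f (pr21 p) (vy1 n m β k)) • c22 β k i)) p := by
  have hdd : ∀ v : J1S n m, DifferentiableAt ℝ (fun q => fderiv ℝ f q v) (pr21 p) :=
    fun v => ((contDiff_dirderiv f hf v).differentiable (by simp)) _
  have h1 : HasFDerivAt (fun p' : J2S n m => pd1x f i (pr21 p'))
      ((fderiv ℝ (fun q => fderiv ℝ f q (vx n m i)) (pr21 p)).comp P21) p :=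
    ((hdd (vx n m i)).hasFDerivAt.comp p P21.hasFDerivAt)
  have h2 : ∀ β : Fin m, HasFDerivAt (fun p' : J2S n m => p'.2.2.1 β i * pd1y f β (pr21 p'))
      (p.2.2.1 β i • (fderiv ℝ (fun q => fderiv ℝ f q (vy n m β)) (pr21 p)).comp P21
        + (fderiv ℝ f (pr21 p) (vy n m β)) • c21 β i) p := by
    intro β
    exact ((c21 β i).hasFDerivAt (x := p)).mul
      ((hdd (vy n m β)).hasFDerivAt.comp p P21.hasFDerivAt)
  have h3 : ∀ (β : Fin m) (k : Fin n),
      HasFDerivAt (fun p' : J2S n m => p'.2.2.2 β k i * pd1y1 f β k (pr21 p'))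
      (p.2.2.2 β k i • (fderiv ℝ (fun q => fderiv ℝ f q (vy1 n m β k)) (pr21 p)).comp P21
        + (fderiv ℝ f (pr21 p) (vy1 n m β k)) • c22 β k i) p := by
    intro β k
    exact ((c22 β k i).hasFDerivAt (x := p)).mul
      ((hdd (vy1 n m β k)).hasFDerivAt.comp p P21.hasFDerivAt)
  have hsum2 : HasFDerivAt (fun p' : J2S n m => ∑ β, p'.2.2.1 β i * pd1y f β (pr21 p'))
      (∑ β, (p.2.2.1 β i • (fderiv ℝ (fun q => fderiv ℝ f q (vy n m β)) (pr21 p)).comp P21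
        + (fderiv ℝ f (pr21 p) (vy n m β)) • c21 β i)) p :=
    HasFDerivAt.fun_sum (fun β _ => h2 β)
  have hsum3 : HasFDerivAt
      (fun p' : J2S n m => ∑ β, ∑ k, p'.2.2.2 β k i * pd1y1 f β k (pr21 p'))
      (∑ β, ∑ k,
        (p.2.2.2 β k i • (fderiv ℝ (fun q => fderiv ℝ f q (vy1 n m β k)) (pr21 p)).comp P21
          + (fderiv ℝ f (pr21 p) (vy1 n m β k)) • c22 β k i)) p :=
    HasFDerivAt.fun_sum (fun β _ => HasFDerivAt.fun_sum (fun k _ => h3 β k))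
  exact (h1.add hsum2).add hsum3

lemma contDiff_TD1 (f : J1S n m → ℝ) (hf : ContDiff ℝ (⊤ : ℕ∞) f) (i : Fin n) :
    ContDiff ℝ (⊤ : ℕ∞) (fun p' : J2S n m => TD1 f i p') := by
  have hc : ∀ v : J1S n m, ContDiff ℝ (⊤ : ℕ∞) (fun p' : J2S n m => fderiv ℝ f (pr21 p') v) :=
    fun v => (contDiff_dirderiv f hf v).comp P21.contDiff
  have hc21 : ∀ (β : Fin m) (j : Fin n), ContDiff ℝ (⊤ : ℕ∞) (fun p' : J2S n m => p'.2.2.1 β j) :=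
    fun β j => (c21 β j).contDiff
  have hc22 : ∀ (β : Fin m) (k j : Fin n), ContDiff ℝ (⊤ : ℕ∞) (fun p' : J2S n m => p'.2.2.2 β k j) :=
    fun β k j => (c22 β k j).contDiff
  exact ((hc _).add (ContDiff.sum fun β _ => (hc21 β i).mul (hc _))).add
    (ContDiff.sum fun β _ => ContDiff.sum fun k _ => (hc22 β k i).mul (hc _))

end AUX2

section AUX3
variable {n m : ℕ}

lemma fderiv_TD1_wy (f : J1S n m → ℝ) (hf : ContDiff ℝ (⊤ : ℕ∞) f) (i : Fin n) (α : Fin m)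
    (p : J2S n m) :
    fderiv ℝ (fun p' : J2S n m => TD1 f i p') p (wy n m α)
    = fderiv ℝ (fun q => fderiv ℝ f q (vx n m i)) (pr21 p) (vy n m α)
      + (∑ β, p.2.2.1 β i * fderiv ℝ (fun q => fderiv ℝ f q (vy n m β)) (pr21 p) (vy n m α))
      + ∑ β, ∑ k, p.2.2.2 β k i
          * fderiv ℝ (fun q => fderiv ℝ f q (vy1 n m β k)) (pr21 p) (vy n m α) := by
  rw [(hasFDerivAt_TD1 f hf i p).fderiv]
  simp only [ContinuousLinearMap.add_apply, ContinuousLinearMap.sum_apply,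
    ContinuousLinearMap.smul_apply, ContinuousLinearMap.coe_comp', Function.comp_apply,
    P21_wy, c21_apply, c22_apply, smul_eq_mul]
  simp [wy]

lemma fderiv_TD1_wy1 (f : J1S n m → ℝ) (hf : ContDiff ℝ (⊤ : ℕ∞) f) (i : Fin n) (α : Fin m)
    (h : Fin n) (p : J2S n m) :
    fderiv ℝ (fun p' : J2S n m => TD1 f i p') p (wy1 n m α h)
    = fderiv ℝ (fun q => fderiv ℝ f q (vx n m i)) (pr21 p) (vy1 n m α h)
      + ((if i = h then fderiv ℝ f (pr21 p) (vy n m α) else 0)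
        + ∑ β, p.2.2.1 β i * fderiv ℝ (fun q => fderiv ℝ f q (vy n m β)) (pr21 p) (vy1 n m α h))
      + ∑ β, ∑ k, p.2.2.2 β k i
          * fderiv ℝ (fun q => fderiv ℝ f q (vy1 n m β k)) (pr21 p) (vy1 n m α h) := by
  rw [(hasFDerivAt_TD1 f hf i p).fderiv]
  simp only [ContinuousLinearMap.add_apply, ContinuousLinearMap.sum_apply,
    ContinuousLinearMap.smul_apply, ContinuousLinearMap.coe_comp', Function.comp_apply,
    P21_wy1, c21_apply, c22_apply, smul_eq_mul]
  simp [wy1, Pi.single_apply, ite_apply, mul_ite,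
    Finset.sum_ite_eq, Finset.sum_ite_eq', Finset.sum_add_distrib]
  ring

lemma fderiv_TD1_wy2 (f : J1S n m → ℝ) (hf : ContDiff ℝ (⊤ : ℕ∞) f) (i : Fin n) (α : Fin m)
    (h j : Fin n) (p : J2S n m) :
    fderiv ℝ (fun p' : J2S n m => TD1 f i p') p (wy2 n m α h j)
    = (if i = j then fderiv ℝ f (pr21 p) (vy1 n m α h) else 0) := by
  rw [(hasFDerivAt_TD1 f hf i p).fderiv]
  simp only [ContinuousLinearMap.add_apply, ContinuousLinearMap.sum_apply,
    ContinuousLinearMap.smul_apply, ContinuousLinearMap.coe_comp', Function.comp_apply,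
    P21_wy2, c21_apply, c22_apply, smul_eq_mul]
  simp [wy2, Pi.single_apply, ite_apply, mul_ite,
    Finset.sum_ite_eq, Finset.sum_ite_eq']

lemma TD2_comp21 (g : J1S n m → ℝ) (hg : ContDiff ℝ (⊤ : ℕ∞) g) (j : Fin n) (p : J3S n m) :
    TD2 (fun p2 => g (pr21 p2)) j p
    = fderiv ℝ g (pr31 p) (vx n m j)
      + ∑ β, p.2.2.1 β j * fderiv ℝ g (pr31 p) (vy n m β)
      + ∑ β, ∑ k, p.2.2.2.1 β k j * fderiv ℝ g (pr31 p) (vy1 n m β k) := by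
  have hd : ∀ p2 : J2S n m, DifferentiableAt ℝ g (pr21 p2) :=
    fun p2 => (hg.differentiable (by simp)) _
  have hcomp : ∀ (p2 : J2S n m) (v : J2S n m),
      fderiv ℝ (fun p2' => g (pr21 p2')) p2 v = fderiv ℝ g (pr21 p2) (P21 v) :=
    fun p2 v => fderiv_comp21 g p2 (hd p2) v
  unfold TD2 pd2x pd2y pd2y1 pd2y2
  simp only [hcomp, P21_mk]
  simp only [show ((0,0,0) : J1S n m) = 0 from rfl, map_zero, mul_zero,
    Finset.sum_const_zero, add_zero]
  rfl

end AUX3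

section AUX4
variable {n m : ℕ}

def Dj1 (s : (Fin n → ℝ) → Fin m → ℝ) (x : Fin n → ℝ) : (Fin n → ℝ) →L[ℝ] J1S n m :=
  (ContinuousLinearMap.id ℝ _).prod
    ((ContinuousLinearMap.pi (fun β => fderiv ℝ (fun x' => s x' β) x)).prod
      (ContinuousLinearMap.pi (fun β => ContinuousLinearMap.pi
        (fun k => fderiv ℝ (ds1 s β k) x))))

lemma hasFDerivAt_j1sec (s : (Fin n → ℝ) → Fin m → ℝ) (hs : ContDiff ℝ (⊤ : ℕ∞) s)
    (x : Fin n → ℝ) : HasFDerivAt (j1sec s) (Dj1 s x) x := by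
  have hsβ : ∀ β, ContDiff ℝ (⊤ : ℕ∞) (fun x' => s x' β) := fun β => (contDiff_pi.1 hs β)
  have hds1 : ∀ β k, ContDiff ℝ (⊤ : ℕ∞) (ds1 s β k) := by
    intro β k
    exact contDiff_dirderiv (fun x' => s x' β) (hsβ β) (Pi.single k 1)
  refine HasFDerivAt.prodMk (hasFDerivAt_id x) (HasFDerivAt.prodMk ?_ ?_)
  · exact hasFDerivAt_pi.2 fun β => ((hsβ β).differentiable (by simp) x).hasFDerivAt
  · exact hasFDerivAt_pi.2 fun β => hasFDerivAt_pi.2 fun k =>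
      ((hds1 β k).differentiable (by simp) x).hasFDerivAt

lemma Dj1_single (s : (Fin n → ℝ) → Fin m → ℝ) (x : Fin n → ℝ) (i : Fin n) :
    (Dj1 s x) (Pi.single i 1)
      = ((Pi.single i 1 : Fin n → ℝ), fun β => ds1 s β i x, fun β k => ds2 s β k i x) := rfl

lemma differentiableAt_comp_j1sec (g : J1S n m → ℝ) (hg : ContDiff ℝ (⊤ : ℕ∞) g)
    (s : (Fin n → ℝ) → Fin m → ℝ) (hs : ContDiff ℝ (⊤ : ℕ∞) s) (x : Fin n → ℝ) :
    DifferentiableAt ℝ (fun x' => g (j1sec s x')) x :=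
  (((hg.differentiable (by simp)) _).hasFDerivAt.comp x (hasFDerivAt_j1sec s hs x)).differentiableAt

lemma fderiv_comp_j1sec (g : J1S n m → ℝ) (hg : ContDiff ℝ (⊤ : ℕ∞) g)
    (s : (Fin n → ℝ) → Fin m → ℝ) (hs : ContDiff ℝ (⊤ : ℕ∞) s) (i : Fin n) (x : Fin n → ℝ) :
    fderiv ℝ (fun x' => g (j1sec s x')) x (Pi.single i 1)
    = fderiv ℝ g (j1sec s x) (vx n m i)
      + ∑ β, ds1 s β i x * fderiv ℝ g (j1sec s x) (vy n m β)
      + ∑ β, ∑ k, ds2 s β k i x * fderiv ℝ g (j1sec s x) (vy1 n m β k) := by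
  have h : HasFDerivAt (fun x' => g (j1sec s x'))
      ((fderiv ℝ g (j1sec s x)).comp (Dj1 s x)) x :=
    ((hg.differentiable (by simp)) _).hasFDerivAt.comp x (hasFDerivAt_j1sec s hs x)
  rw [h.fderiv, ContinuousLinearMap.comp_apply, Dj1_single,
    clm_decomp (fderiv ℝ g (j1sec s x))]
  simp [Pi.single_apply, Finset.sum_ite_eq, Finset.sum_ite_eq']

end AUX4

section AUX5
variable {n m : ℕ}

lemma sum_rot (F : Fin m → Fin n → Fin n → ℝ) :
    ∑ α, ∑ i, ∑ j, F α i j = ∑ j, ∑ α, ∑ i, F α i j := by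
  rw [show (∑ α, ∑ i, ∑ j, F α i j) = ∑ α, ∑ j, ∑ i, F α i j from
    Finset.sum_congr rfl (fun α _ => Finset.sum_comm), Finset.sum_comm]

lemma parta {L : J2S n m → ℝ} {A : Fin m → Fin n → Fin n → J1S n m → ℝ}
    {L0 : J1S n m → ℝ} (haff : IsAffine L A L0)
    {Lf : Fin n → J1S n m → ℝ}
    (hprim : ∀ α i h q, A α i h q = pd1y1 (Lf i) α h q)
    {Lbar : J1S n m → ℝ}
    (hLbar : ∀ q, Lbar q =
      L0 q - (∑ i, pd1x (Lf i) i q) - ∑ α, ∑ i, q.2.2 α i * pd1y (Lf i) α q)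
    (p : J2S n m) : Lbar (pr21 p) = L p - ∑ i, TD1 (Lf i) i p := by
  rw [hLbar, haff.2 p]
  simp only [TD1]
  rw [Finset.sum_add_distrib, Finset.sum_add_distrib]
  have key : ∑ α, ∑ i, ∑ j, A α i j (pr21 p) * p.2.2.2 α i j
      = ∑ i, ∑ α, ∑ k, p.2.2.2 α k i * pd1y1 (Lf i) α k (pr21 p) := by
    rw [sum_rot]
    refine Finset.sum_congr rfl fun i _ => Finset.sum_congr rfl fun α _ =>
      Finset.sum_congr rfl fun k _ => ?_
    rw [← hprim α i k (pr21 p), haff.1 α k i (pr21 p), mul_comm]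
  have key2 : ∑ α, ∑ i, (pr21 p).2.2 α i * pd1y (Lf i) α (pr21 p)
      = ∑ i, ∑ α, p.2.2.1 α i * pd1y (Lf i) α (pr21 p) := Finset.sum_comm
  rw [key, key2]
  ring

end AUX5

/-- Theorem 5.1-(iii): for a second-order density `Λ = L·v`
with Poincaré–Cartan form projectable onto `J¹E`, the first-order Lagrangian
`L̄ = L₀ − ∂Lⁱ/∂xⁱ − y_i^α ∂Lⁱ/∂y^α` satisfies `L̄ = L − D_i Lⁱ` (a total
divergence difference), hence the Euler–Lagrange equations of `L̄` coincide with
those of `L`: `E_α(L) = E_α(L̄)` (along every section). -/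
theorem statement8 {n m : ℕ} (L : J2S n m → ℝ) (hL : ContDiff ℝ (⊤ : ℕ∞) L)
    (A : Fin m → Fin n → Fin n → J1S n m → ℝ) (L0 : J1S n m → ℝ)
    (hA : ∀ α i j, ContDiff ℝ (⊤ : ℕ∞) (A α i j)) (hL0 : ContDiff ℝ (⊤ : ℕ∞) L0)
    (haff : IsAffine L A L0) (hsymm : SymmCond A)
    (Lf : Fin n → J1S n m → ℝ) (hLf : ∀ i, ContDiff ℝ (⊤ : ℕ∞) (Lf i))
    (hprim : ∀ α i h q, A α i h q = pd1y1 (Lf i) α h q)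
    (Lbar : J1S n m → ℝ)
    (hLbar : ∀ q, Lbar q =
      L0 q - (∑ i, pd1x (Lf i) i q) - ∑ α, ∑ i, q.2.2 α i * pd1y (Lf i) α q) :
    -- `L̄ = L − D_i Lⁱ`:
    ((∀ p : J2S n m, Lbar (pr21 p) = L p - ∑ i, TD1 (Lf i) i p) ∧
    -- `E_α(L) = E_α(L̄)` along every section:
    (∀ s : (Fin n → ℝ) → Fin m → ℝ, ContDiff ℝ (⊤ : ℕ∞) (fun x => s x) →
      ∀ (α : Fin m) (x : Fin n → ℝ),
        pd2y L α (j2sec s x) -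
          (∑ i, fderiv ℝ (fun x' => Lc0 L α i (j3sec s x')) x (Pi.single i 1)) =
        pd1y Lbar α (j1sec s x) -
          ∑ i, fderiv ℝ (fun x' => pd1y1 Lbar α i (j1sec s x')) x
            (Pi.single i 1))) := by
  classical
  have hparta : ∀ p : J2S n m, Lbar (pr21 p) = L p - ∑ i, TD1 (Lf i) i p :=
    parta haff hprim hLbar
  refine ⟨hparta, ?_⟩
  intro s hs α x
  have hdecomp : L = fun p => Lbar (pr21 p) + ∑ i, TD1 (Lf i) i p := by
    funext p
    have := hparta p
    linarith
  have hTD1c : ∀ i : Fin n, ContDiff ℝ (⊤ : ℕ∞) (fun p' : J2S n m => TD1 (Lf i) i p') :=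
    fun i => contDiff_TD1 (Lf i) (hLf i) i
  have hLpr : ContDiff ℝ (⊤ : ℕ∞) (fun p : J2S n m => Lbar (pr21 p)) := by
    rw [show (fun p : J2S n m => Lbar (pr21 p)) = fun p => L p - ∑ i, TD1 (Lf i) i p from
      funext hparta]
    exact hL.sub (ContDiff.sum fun i _ => hTD1c i)
  have hLbarc : ContDiff ℝ (⊤ : ℕ∞) Lbar := by
    have e : Lbar = fun q => (fun p : J2S n m => Lbar (pr21 p)) (E12 q) := rfl
    rw [e]; exact hLpr.comp E12.contDiff
  have hfdL : ∀ (p : J2S n m) (v : J2S n m),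
      fderiv ℝ L p v = fderiv ℝ Lbar (pr21 p) (P21 v)
        + ∑ i, fderiv ℝ (fun p' => TD1 (Lf i) i p') p v := by
    intro p v
    conv_lhs => rw [hdecomp]
    rw [fderiv_fun_add (((hLpr.differentiable (by simp)) p))
      (DifferentiableAt.fun_sum (fun i _ => ((hTD1c i).differentiable (by simp)) p)),
      ContinuousLinearMap.add_apply,
      fderiv_fun_sum (fun i _ => ((hTD1c i).differentiable (by simp)) p),
      ContinuousLinearMap.sum_apply,
      fderiv_comp21 Lbar p ((hLbarc.differentiable (by simp)) _) v]
  have hLc2 : ∀ (β : Fin m) (h j : Fin n),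
      (fun p2 : J2S n m => Lc2 L β h j p2)
        = fun p2 => fderiv ℝ (Lf j) (pr21 p2) (vy1 n m β h) := by
    intro β h j
    funext p2
    show fderiv ℝ L p2 (wy2 n m β h j) = _
    rw [hfdL, show (P21 (wy2 n m β h j) : J1S n m) = 0 from rfl, map_zero,
      Finset.sum_congr rfl (fun i _ => fderiv_TD1_wy2 (Lf i) (hLf i) i β h j p2),
      Finset.sum_ite_eq' Finset.univ j (fun i => fderiv ℝ (Lf i) (pr21 p2) (vy1 n m β h))]
    simp
  have hLc0 : ∀ (β : Fin m) (h : Fin n) (p3 : J3S n m),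
      Lc0 L β h p3 = pd1y1 Lbar β h (pr31 p3) + pd1y (Lf h) β (pr31 p3) := by
    intro β h p3
    have hpr : pr21 (pr32 p3) = pr31 p3 := rfl
    have hc1 : (pr32 p3).2.2.1 = p3.2.2.1 := rfl
    have hc2 : (pr32 p3).2.2.2 = p3.2.2.2.1 := rfl
    have hTD2 : ∀ j : Fin n, TD2 (fun p2 => fderiv ℝ (Lf j) (pr21 p2) (vy1 n m β h)) j p3
        = fderiv ℝ (fun q => fderiv ℝ (Lf j) q (vx n m j)) (pr31 p3) (vy1 n m β h)
          + ∑ γ, p3.2.2.1 γ j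
              * fderiv ℝ (fun q => fderiv ℝ (Lf j) q (vy n m γ)) (pr31 p3) (vy1 n m β h)
          + ∑ γ, ∑ k, p3.2.2.2.1 γ k j
              * fderiv ℝ (fun q => fderiv ℝ (Lf j) q (vy1 n m γ k)) (pr31 p3)
                  (vy1 n m β h) := by
      intro j
      rw [TD2_comp21 (fun q => fderiv ℝ (Lf j) q (vy1 n m β h))
        (contDiff_dirderiv (Lf j) (hLf j) _) j p3,
        clairaut (Lf j) (hLf j) (pr31 p3) (vy1 n m β h) (vx n m j)]
      congr 1
      congr 1
      · exact Finset.sum_congr rfl fun γ _ => by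
          rw [clairaut (Lf j) (hLf j) (pr31 p3) (vy1 n m β h) (vy n m γ)]
      · exact Finset.sum_congr rfl fun γ _ => Finset.sum_congr rfl fun k _ => by
          rw [clairaut (Lf j) (hLf j) (pr31 p3) (vy1 n m β h) (vy1 n m γ k)]
    have hA : ∀ i : Fin n, fderiv ℝ (fun p' => TD1 (Lf i) i p') (pr32 p3) (wy1 n m β h)
        = fderiv ℝ (fun q => fderiv ℝ (Lf i) q (vx n m i)) (pr31 p3) (vy1 n m β h)
          + ((if i = h then fderiv ℝ (Lf i) (pr31 p3) (vy n m β) else 0)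
            + ∑ γ, p3.2.2.1 γ i
                * fderiv ℝ (fun q => fderiv ℝ (Lf i) q (vy n m γ)) (pr31 p3) (vy1 n m β h))
          + ∑ γ, ∑ k, p3.2.2.2.1 γ k i
              * fderiv ℝ (fun q => fderiv ℝ (Lf i) q (vy1 n m γ k)) (pr31 p3)
                  (vy1 n m β h) := by
      intro i
      rw [fderiv_TD1_wy1 (Lf i) (hLf i) i β h (pr32 p3), hpr, hc1, hc2]
    show fderiv ℝ L (pr32 p3) (wy1 n m β h)
        - ∑ j, TD2 (fun q => Lc2 L β h j q) j p3 = _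
    simp only [hLc2]
    rw [hfdL, Finset.sum_congr rfl (fun i _ => hA i),
      Finset.sum_congr rfl (fun j _ => hTD2 j), hpr,
      show (P21 (wy1 n m β h) : J1S n m) = vy1 n m β h from rfl]
    have hsplit : ∑ i, (fderiv ℝ (fun q => fderiv ℝ (Lf i) q (vx n m i)) (pr31 p3)
            (vy1 n m β h)
          + ((if i = h then fderiv ℝ (Lf i) (pr31 p3) (vy n m β) else 0)
            + ∑ γ, p3.2.2.1 γ i
                * fderiv ℝ (fun q => fderiv ℝ (Lf i) q (vy n m γ)) (pr31 p3) (vy1 n m β h))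
          + ∑ γ, ∑ k, p3.2.2.2.1 γ k i
              * fderiv ℝ (fun q => fderiv ℝ (Lf i) q (vy1 n m γ k)) (pr31 p3) (vy1 n m β h))
        - ∑ j, (fderiv ℝ (fun q => fderiv ℝ (Lf j) q (vx n m j)) (pr31 p3) (vy1 n m β h)
          + ∑ γ, p3.2.2.1 γ j
              * fderiv ℝ (fun q => fderiv ℝ (Lf j) q (vy n m γ)) (pr31 p3) (vy1 n m β h)
          + ∑ γ, ∑ k, p3.2.2.2.1 γ k j
              * fderiv ℝ (fun q => fderiv ℝ (Lf j) q (vy1 n m γ k)) (pr31 p3) (vy1 n m β h))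
        = ∑ i, if i = h then fderiv ℝ (Lf i) (pr31 p3) (vy n m β) else 0 := by
      rw [← Finset.sum_sub_distrib]
      exact Finset.sum_congr rfl fun i _ => by ring
    have hfin : pd1y1 Lbar β h (pr31 p3) = fderiv ℝ Lbar (pr31 p3) (vy1 n m β h) := rfl
    have hfin2 : pd1y (Lf h) β (pr31 p3) = fderiv ℝ (Lf h) (pr31 p3) (vy n m β) := rfl
    rw [add_sub_assoc, hsplit,
      Finset.sum_ite_eq' Finset.univ h (fun i => fderiv ℝ (Lf i) (pr31 p3) (vy n m β)),
      hfin, hfin2]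
    simp
  have hP1 : pr21 (j2sec s x) = j1sec s x := rfl
  have hA2 : ∀ i : Fin n, fderiv ℝ (fun p' => TD1 (Lf i) i p') (j2sec s x) (wy n m α)
      = fderiv ℝ (fun x' => pd1y (Lf i) α (j1sec s x')) x (Pi.single i 1) := by
    intro i
    have hg : (fun x' => pd1y (Lf i) α (j1sec s x'))
        = fun x' => (fun q => fderiv ℝ (Lf i) q (vy n m α)) (j1sec s x') := rfl
    rw [hg, fderiv_comp_j1sec (fun q => fderiv ℝ (Lf i) q (vy n m α))
      (contDiff_dirderiv (Lf i) (hLf i) _) s hs i x,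
      fderiv_TD1_wy (Lf i) (hLf i) i α (j2sec s x), hP1,
      show (j2sec s x).2.2.1 = fun β k => ds1 s β k x from rfl,
      show (j2sec s x).2.2.2 = fun β k l => ds2 s β k l x from rfl,
      clairaut (Lf i) (hLf i) (j1sec s x) (vx n m i) (vy n m α)]
    congr 1
    congr 1
    · exact Finset.sum_congr rfl fun γ _ => by
        rw [clairaut (Lf i) (hLf i) (j1sec s x) (vy n m γ) (vy n m α)]
    · exact Finset.sum_congr rfl fun γ _ => Finset.sum_congr rfl fun k _ => by
        rw [clairaut (Lf i) (hLf i) (j1sec s x) (vy1 n m γ k) (vy n m α)]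
  have hB2 : ∀ i : Fin n, fderiv ℝ (fun x' => Lc0 L α i (j3sec s x')) x (Pi.single i 1)
      = fderiv ℝ (fun x' => pd1y1 Lbar α i (j1sec s x')) x (Pi.single i 1)
        + fderiv ℝ (fun x' => pd1y (Lf i) α (j1sec s x')) x (Pi.single i 1) := by
    intro i
    have hg : (fun x' => Lc0 L α i (j3sec s x'))
        = fun x' => pd1y1 Lbar α i (j1sec s x') + pd1y (Lf i) α (j1sec s x') := by
      funext x'
      exact hLc0 α i (j3sec s x')
    have d1 : DifferentiableAt ℝ (fun x' => pd1y1 Lbar α i (j1sec s x')) x :=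
      differentiableAt_comp_j1sec (fun q => fderiv ℝ Lbar q (vy1 n m α i))
        (contDiff_dirderiv Lbar hLbarc _) s hs x
    have d2 : DifferentiableAt ℝ (fun x' => pd1y (Lf i) α (j1sec s x')) x :=
      differentiableAt_comp_j1sec (fun q => fderiv ℝ (Lf i) q (vy n m α))
        (contDiff_dirderiv (Lf i) (hLf i) _) s hs x
    rw [hg, fderiv_fun_add d1 d2, ContinuousLinearMap.add_apply]
  have e0 : pd2y L α (j2sec s x) = fderiv ℝ L (j2sec s x) (wy n m α) := rfl
  have e1 : fderiv ℝ Lbar (pr21 (j2sec s x)) (P21 (wy n m α)) = pd1y Lbar α (j1sec s x) :=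
    rfl
  rw [e0, hfdL, e1, Finset.sum_congr rfl (fun i _ => hA2 i),
    Finset.sum_congr rfl (fun i _ => hB2 i), Finset.sum_add_distrib]
  ring
end
end

section
/- The Einstein–Hilbert Lagrangian L_EH on the bundle of pseudo-Riemannian metrics, defined by L_EH(j²ₓg) = ρ(x)·g^{ij}(x)·(R^g)^h_{ihj}(x) where ρ = √|det(g_{ab})|, is an affine function of the second-order coordinates y_{ab,cd}, with second-order coefficients (L_EH)_{rs}^{ij} = (1/(2−δ_{ij}))·∂L_EH/∂y_{rs,ij} = (1/(1+δ_{rs}))·ρ·(y^{ir}y^{js} + y^{jr}y^{is} − 2y^{rs}y^{ij}) depending only on the fibre coordinates y_{kl} (not on y_{kl,m}); consequently its Poincaré–Cartan form projects onto J¹M. -/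
/-! The `2`-jet enters `L_EH` only through the formal derivatives `∂_lΓ`, i.e. through the
derivative of `Γ` in its `1`-jet argument, in which `Γ` is linear. So `∂_lΓ^k_{ij}` is its value
at `y_{ab,cd} = 0` plus `Γ^k_{ij}` evaluated on the `1`-jet `y_{ab,c l}`. Contracting with
`ρ y^{ij}`, the symmetries of `y^{ij}` and of `y_{ab,cd}` in `(a, b)` collapse the six resulting
second-order sums to `ρ y^{ac} y^{bd} y_{ab,cd}` and `ρ y^{ab} y^{cd} y_{ab,cd}`; the rest is
`L_EH` at `y_{ab,cd} = 0`. -/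

noncomputable section

open scoped BigOperators

/-- Fibre coordinates `y_{ab}` of the bundle of pseudo-Riemannian metrics. -/
abbrev Met (n : ℕ) := Fin n → Fin n → ℝ

/-- First-order jet coordinates `y_{ab,c} = ∂_c g_{ab}`. -/
abbrev Met1 (n : ℕ) := Fin n → Fin n → Fin n → ℝ

/-- Second-order jet coordinates `y_{ab,cd} = ∂_c∂_d g_{ab}`. -/
abbrev Met2 (n : ℕ) := Fin n → Fin n → Fin n → Fin n → ℝ

variable {n : ℕ}

/-- The inverse metric components `y^{ij}`. -/
def ginv (y : Met n) : Met n := fun i j => (Matrix.of y)⁻¹ i j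

/-- `ρ = √|det(y_{ab})|`. -/
def ρfun (y : Met n) : ℝ := Real.sqrt |(Matrix.of y).det|

/-- Christoffel symbols `Γ^k_{ij}` of the Levi-Civita connection, as functions of
the `1`-jet coordinates of the metric. -/
def Γfun (y : Met n) (y1 : Met1 n) (k i j : Fin n) : ℝ :=
  (1 / 2) * ∑ a, ginv y k a * (y1 a j i + y1 a i j - y1 i j a)

/-- Formal (total) derivative `∂_l Γ^k_{ij}` on the jet coordinates. -/
def dΓ (y : Met n) (y1 : Met1 n) (y2 : Met2 n) (l k i j : Fin n) : ℝ :=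
  fderiv ℝ (fun q : Met n × Met1 n => Γfun q.1 q.2 k i j) (y, y1)
    (fun a b => y1 a b l, fun a b c => y2 a b c l)

/-- The curvature tensor
`R^i_{jkl} = ∂_kΓ^i_{jl} − ∂_lΓ^i_{jk} + Γ^a_{jl}Γ^i_{ka} − Γ^a_{jk}Γ^i_{la}`,
as a function of the `2`-jet coordinates of the metric. -/
def Rcurv (y : Met n) (y1 : Met1 n) (y2 : Met2 n) (i j k l : Fin n) : ℝ :=
  dΓ y y1 y2 k i j l - dΓ y y1 y2 l i j k
    + (∑ a, Γfun y y1 a j l * Γfun y y1 i k a)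
    - ∑ a, Γfun y y1 a j k * Γfun y y1 i l a

/-- The Einstein–Hilbert Lagrangian `L_EH = ρ·y^{ij}·R^h_{ihj}` in jet
coordinates. -/
def LEH (y : Met n) (y1 : Met1 n) (y2 : Met2 n) : ℝ :=
  ρfun y * ∑ i, ∑ j, ginv y i j * ∑ h, Rcurv y y1 y2 h i h j

/-- Symmetry of a fibre point. -/
def MetSym (y : Met n) : Prop := ∀ i j, y i j = y j i

def Met1Sym (y1 : Met1 n) : Prop := ∀ a b c, y1 a b c = y1 b a c

def Met2Sym (y2 : Met2 n) : Prop :=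
  ∀ a b c d, y2 a b c d = y2 b a c d ∧ y2 a b c d = y2 a b d c

theorem Matrix.differentiable_det_comp {E : Type*} [NormedAddCommGroup E] [NormedSpace ℝ E]
    {m : Type*} [Fintype m] [DecidableEq m] {f : E → Matrix m m ℝ}
    (hf : ∀ i j, Differentiable ℝ fun x => f x i j) :
    Differentiable ℝ fun x => (f x).det := by
  simp only [Matrix.det_apply']
  fun_prop

theorem Fintype.sum_four_eq_of_equiv {ι M : Type*} [Fintype ι] [AddCommMonoid M]
    (f F : ι → ι → ι → ι → M) (e : ι × ι × ι × ι ≃ ι × ι × ι × ι)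
    (h : ∀ p : ι × ι × ι × ι,
      f p.1 p.2.1 p.2.2.1 p.2.2.2 = F (e p).1 (e p).2.1 (e p).2.2.1 (e p).2.2.2) :
    ∑ a, ∑ b, ∑ c, ∑ d, f a b c d = ∑ a, ∑ b, ∑ c, ∑ d, F a b c d := by
  simp only [← Fintype.sum_prod_type']
  exact Fintype.sum_equiv e _ _ h

theorem ginv_symm {y : Met n} (hy : MetSym y) : MetSym (ginv y) :=
  fun i j => ((Matrix.IsSymm.ext fun p q => hy q p : (Matrix.of y).IsSymm).inv.apply j i)

theorem ginv_eq_det_inv_mul (y : Met n) (k a : Fin n) :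
    ginv y k a = ((Matrix.of y).det)⁻¹ * ((Matrix.of y).updateRow a (Pi.single k 1)).det := by
  rw [ginv, Matrix.inv_def, Matrix.smul_apply, Matrix.adjugate_apply, Ring.inverse_eq_inv',
    smul_eq_mul]

theorem differentiableAt_ginv {y : Met n} (hy : IsUnit (Matrix.of y).det) (k a : Fin n) :
    DifferentiableAt ℝ (fun y' => ginv y' k a) y := by
  simp only [ginv_eq_det_inv_mul]
  refine DifferentiableAt.mul ?_ ?_
  · exact (Matrix.differentiable_det_comp (fun i j => by simp only [Matrix.of_apply]; fun_prop)
      y).inv hy.ne_zero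
  · refine Matrix.differentiable_det_comp (fun i j => ?_) y
    simp only [Matrix.updateRow_apply]
    split_ifs
    · fun_prop
    · simp only [Matrix.of_apply]; fun_prop

theorem differentiableAt_Γfun {y : Met n} (hy : IsUnit (Matrix.of y).det) (y1 : Met1 n)
    (k i j : Fin n) :
    DifferentiableAt ℝ (fun q : Met n × Met1 n => Γfun q.1 q.2 k i j) (y, y1) := by
  have hg : ∀ a, DifferentiableAt ℝ (fun q : Met n × Met1 n => ginv q.1 k a) (y, y1) :=
    fun a => (differentiableAt_ginv hy k a).comp (y, y1) (f := Prod.fst) differentiableAt_fst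
  unfold Γfun
  fun_prop

theorem Γfun_add_smul (y : Met n) (y1 w : Met1 n) (t : ℝ) (k i j : Fin n) :
    Γfun y (y1 + t • w) k i j = Γfun y y1 k i j + t * Γfun y w k i j := by
  simp only [Γfun, Pi.add_apply, Pi.smul_apply, smul_eq_mul, Finset.mul_sum,
    ← Finset.sum_add_distrib]
  exact Finset.sum_congr rfl fun a _ => by ring

theorem lineDeriv_Γfun_snd (y : Met n) (y1 w : Met1 n) (k i j : Fin n) :
    lineDeriv ℝ (fun q : Met n × Met1 n => Γfun q.1 q.2 k i j) (y, y1) (0, w)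
      = Γfun y w k i j := by
  simp only [lineDeriv, Prod.smul_mk, Prod.mk_add_mk, smul_zero, add_zero, Γfun_add_smul]
  simp

theorem dΓ_eq_dΓ_zero_add {y : Met n} (hy : IsUnit (Matrix.of y).det) (y1 : Met1 n)
    (y2 : Met2 n) (l k i j : Fin n) :
    dΓ y y1 y2 l k i j = dΓ y y1 0 l k i j + Γfun y (fun a b c => y2 a b c l) k i j := by
  have hdir : ((fun a b => y1 a b l, fun a b c => y2 a b c l) : Met n × Met1 n)
      = (fun a b => y1 a b l, fun a b c => (0 : Met2 n) a b c l)
        + (0, fun a b c => y2 a b c l) := by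
    ext <;> simp
  rw [dΓ, hdir, map_add,
    ← (differentiableAt_Γfun hy y1 k i j).lineDeriv_eq_fderiv (v := (0, _)),
    lineDeriv_Γfun_snd]
  rfl

theorem Rcurv_eq_Rcurv_zero_add {y : Met n} (hy : IsUnit (Matrix.of y).det) (y1 : Met1 n)
    (y2 : Met2 n) (i j k l : Fin n) :
    Rcurv y y1 y2 i j k l = Rcurv y y1 0 i j k l
      + (Γfun y (fun a b c => y2 a b c k) i j l - Γfun y (fun a b c => y2 a b c l) i j k) := by
  rw [Rcurv, Rcurv, dΓ_eq_dΓ_zero_add hy y1 y2 k i j l, dΓ_eq_dΓ_zero_add hy y1 y2 l i j k]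
  ring

theorem sum_mul_christoffel_terms_eq (g : Met n) (T : Met2 n) (hg : MetSym g)
    (hT : ∀ a b c d, T a b c d = T b a c d) :
    ∑ i, ∑ j, ∑ h, ∑ a, g i j * g h a *
        (T a j i h + T a i j h - T i j a h - (T a h i j + T a i h j - T i h a j))
      = 2 * ∑ a, ∑ b, ∑ c, ∑ d, (g a c * g b d - g a b * g c d) * T a b c d := by
  set P := ∑ a, ∑ b, ∑ c, ∑ d, g a c * g b d * T a b c d
  set Q := ∑ a, ∑ b, ∑ c, ∑ d, g a b * g c d * T a b c d
  have h1 : ∑ i, ∑ j, ∑ h, ∑ a, g i j * g h a * T a j i h = P := by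
    refine Fintype.sum_four_eq_of_equiv _ _ ⟨fun p => (p.2.1, p.2.2.2, p.1, p.2.2.1),
      fun q => (q.2.2.1, q.1, q.2.2.2, q.2.1), fun _ => rfl, fun _ => rfl⟩ fun ⟨i, j, h, a⟩ => ?_
    change g i j * g h a * T a j i h = g j i * g a h * T j a i h
    rw [hT a j i h, hg j i, hg a h]
  have h2 : ∑ i, ∑ j, ∑ h, ∑ a, g i j * g h a * T a i j h = P := by
    refine Fintype.sum_four_eq_of_equiv _ _ ⟨fun p => (p.1, p.2.2.2, p.2.1, p.2.2.1),
      fun q => (q.1, q.2.2.1, q.2.2.2, q.2.1), fun _ => rfl, fun _ => rfl⟩ fun ⟨i, j, h, a⟩ => ?_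
    change g i j * g h a * T a i j h = g i j * g a h * T i a j h
    rw [hT a i j h, hg a h]
  have h3 : ∑ i, ∑ j, ∑ h, ∑ a, g i j * g h a * T i j a h = Q := by
    refine Fintype.sum_four_eq_of_equiv _ _ ⟨fun p => (p.1, p.2.1, p.2.2.2, p.2.2.1),
      fun q => (q.1, q.2.1, q.2.2.2, q.2.2.1), fun _ => rfl, fun _ => rfl⟩ fun ⟨i, j, h, a⟩ => ?_
    change g i j * g h a * T i j a h = g i j * g a h * T i j a h
    rw [hg a h]
  have h4 : ∑ i, ∑ j, ∑ h, ∑ a, g i j * g h a * T a h i j = Q := by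
    refine Fintype.sum_four_eq_of_equiv _ _ ⟨fun p => (p.2.2.2, p.2.2.1, p.1, p.2.1),
      fun q => (q.2.2.1, q.2.2.2, q.2.1, q.1), fun _ => rfl, fun _ => rfl⟩ fun ⟨i, j, h, a⟩ => ?_
    change g i j * g h a * T a h i j = g a h * g i j * T a h i j
    rw [hg a h, mul_comm (g i j)]
  have h5 : ∑ i, ∑ j, ∑ h, ∑ a, g i j * g h a * T a i h j = P := by
    refine Fintype.sum_four_eq_of_equiv _ _ ⟨fun p => (p.2.2.2, p.1, p.2.2.1, p.2.1),
      fun q => (q.2.1, q.2.2.2, q.2.2.1, q.1), fun _ => rfl, fun _ => rfl⟩ fun ⟨i, j, h, a⟩ => ?_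
    change g i j * g h a * T a i h j = g a h * g i j * T a i h j
    rw [hg a h, mul_comm (g i j)]
  have h6 : ∑ i, ∑ j, ∑ h, ∑ a, g i j * g h a * T i h a j = P := by
    refine Fintype.sum_four_eq_of_equiv _ _ ⟨fun p => (p.2.2.1, p.1, p.2.2.2, p.2.1),
      fun q => (q.2.1, q.2.2.2, q.1, q.2.2.1), fun _ => rfl, fun _ => rfl⟩ fun ⟨i, j, h, a⟩ => ?_
    change g i j * g h a * T i h a j = g h a * g i j * T h i a j
    rw [hT i h a j, mul_comm (g i j)]
  have hPQ : ∑ a, ∑ b, ∑ c, ∑ d, (g a c * g b d - g a b * g c d) * T a b c d = P - Q := by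
    simp only [P, Q, ← Finset.sum_sub_distrib, sub_mul]
  simp only [mul_sub, mul_add, Finset.sum_add_distrib, Finset.sum_sub_distrib]
  rw [h1, h2, h3, h4, h5, h6, hPQ]
  ring

theorem sum_ginv_mul_sum_Γfun_sub {y : Met n} (hy : MetSym y) {y2 : Met2 n} (h2 : Met2Sym y2) :
    ∑ i, ∑ j, ginv y i j * ∑ h,
        (Γfun y (fun a b c => y2 a b c h) h i j - Γfun y (fun a b c => y2 a b c j) h i h)
      = ∑ a, ∑ b, ∑ c, ∑ d,
          (ginv y a c * ginv y b d - ginv y a b * ginv y c d) * y2 a b c d := by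
  have hsum := sum_mul_christoffel_terms_eq (ginv y) y2 (ginv_symm hy) fun a b c d => (h2 a b c d).1
  rw [← mul_right_inj' two_ne_zero, ← hsum]
  simp only [Γfun, Finset.mul_sum, ← Finset.sum_sub_distrib]
  refine Finset.sum_congr rfl fun i _ => Finset.sum_congr rfl fun j _ =>
    Finset.sum_congr rfl fun h _ => Finset.sum_congr rfl fun a _ => by ring

/-- the Einstein–Hilbert Lagrangian
`L_EH(j²ₓg) = ρ·g^{ij}·(R^g)^h_{ihj}` is an affine function of the second-order
jet coordinates, `L_EH = ρ·Σ(y^{ac}y^{bd} − y^{ab}y^{cd})·y_{ab,cd} + (L_EH)₀`,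
with second-order coefficients depending only on the fibre coordinates `y_{kl}`
(not on `y_{kl,m}`); consequently its Poincaré–Cartan form projects onto `J¹M`. -/
theorem statement10 {n : ℕ} :
    ∃ L0 : Met n → Met1 n → ℝ,
      ∀ (y : Met n) (y1 : Met1 n) (y2 : Met2 n),
        MetSym y → IsUnit (Matrix.of y).det → Met1Sym y1 → Met2Sym y2 →
        LEH y y1 y2 =
          ρfun y * (∑ a, ∑ b, ∑ c, ∑ d,
            (ginv y a c * ginv y b d - ginv y a b * ginv y c d) * y2 a b c d)
            + L0 y y1 := by
  refine ⟨fun y y1 => LEH y y1 0, fun y y1 y2 hsym hdet _ h2 => ?_⟩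
  have hR : ∀ i j, ∑ h, Rcurv y y1 y2 h i h j = ∑ h, Rcurv y y1 0 h i h j
      + ∑ h, (Γfun y (fun a b c => y2 a b c h) h i j - Γfun y (fun a b c => y2 a b c j) h i h) :=
    fun i j => by simp only [Rcurv_eq_Rcurv_zero_add hdet y1 y2, Finset.sum_add_distrib]
  simp only [LEH, hR, mul_add, Finset.sum_add_distrib]
  rw [sum_ginv_mul_sum_Γfun_sub hsym h2]
  ring
end
end
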